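/- arXiv:2310.18202 — 7 statements merged into one kernel-verified Lean document; each statement's English description precedes it below -/
import Mathlib

section
/- Let F be a graph with at least one edge and let H be a graph. If H is F-abundant, then there exists a homomorphism from H to F. -/
/-!
Blow `F` up by replacing each vertex with an independent set of size `m`. A transversal
(one vertex from each part) spans a copy of `F`; there are `m ^ |V(F)|` transversals and each
edge lies in at most `m ^ (|V(F)| - 2)` of them, so deleting fewer than `m ^ 2` edges leaves a
copy of `F`. On `n = |V(F)| * m` vertices this says the blow-up is `1/|V(F)|²`-far from
`F`-free, and `|V(F)| ≥ 2` because `F` has an edge. By abundance a large blow-up contains a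
copy of `H`, and composing with the projection of the blow-up onto `F` gives `H →g F`.
-/

/-- `G` contains a copy of `F`, i.e. a subgraph isomorphic to `F`
(equivalently an injective graph homomorphism from `F`). -/
def ContainsCopy {α β : Type*} (F : SimpleGraph α) (G : SimpleGraph β) : Prop :=
  ∃ f : F →g G, Function.Injective f

/-- The number of copies of `H` in `G`, i.e. the number of subgraphs of `G`
isomorphic to `H`. -/
noncomputable def copyCount {α β : Type*} (H : SimpleGraph α) (G : SimpleGraph β) : ℕ :=
  {G' : G.Subgraph | Nonempty (H ≃g G'.coe)}.ncard

/-- `G` is `ε`-far from `F`-free: every graph obtained from `G` by deleting fewer than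
`ε·|V(G)|²` edges still contains a copy of `F`. -/
def FarFromFree {α β : Type*} (F : SimpleGraph α) (G : SimpleGraph β) (ε : ℝ) : Prop :=
  ∀ G' : SimpleGraph β, G' ≤ G →
    ((G.edgeSet \ G'.edgeSet).ncard : ℝ) < ε * (Nat.card β : ℝ) ^ 2 →
    ContainsCopy F G'

/-- `H` is `F`-abundant: there are constants `c, C > 0` such that for every `ε ∈ (0,1)`
and all sufficiently large `n`, every `n`-vertex graph that is `ε`-far from `F`-free
contains at least `c·ε^C·n^{|V(H)|}` copies of `H`. -/
def Abundant {α β : Type*} (F : SimpleGraph α) (H : SimpleGraph β) : Prop :=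
  ∃ c C : ℝ, 0 < c ∧ 0 < C ∧ ∀ ε : ℝ, 0 < ε → ε < 1 → ∃ n₀ : ℕ, ∀ n : ℕ, n₀ ≤ n →
    ∀ G : SimpleGraph (Fin n), FarFromFree F G ε →
      c * ε ^ C * (n : ℝ) ^ (Nat.card β) ≤ (copyCount H G : ℝ)

open Finset

lemma card_filter_apply_eq_apply_eq_le {α : Type*} [Fintype α] [DecidableEq α] {a b : α}
    (hab : a ≠ b) (m : ℕ) (i j : Fin m) :
    #{f : α → Fin m | f a = i ∧ f b = j} ≤ m ^ (Fintype.card α - 2) := by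
  have hcard : Fintype.card (({a, b}ᶜ : Finset α) → Fin m) = m ^ (Fintype.card α - 2) := by
    rw [Fintype.card_fun, Fintype.card_coe, Fintype.card_fin, card_compl, card_pair hab]
  rw [← hcard, ← card_univ]
  refine card_le_card_of_injOn (fun f x => f x.1) (fun _ _ => mem_univ _) ?_
  intro f hf g hg hfg
  simp only [coe_filter, mem_univ, true_and, Set.mem_ofPred_eq] at hf hg
  funext x
  by_cases hxa : x = a
  · rw [hxa, hf.1, hg.1]
  by_cases hxb : x = b
  · rw [hxb, hf.2, hg.2]
  exact congrFun hfg ⟨x, by simp [hxa, hxb]⟩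

lemma nonempty_hom_of_copyCount_pos {β V : Type*} {H : SimpleGraph β} {G : SimpleGraph V}
    (h : 0 < copyCount H G) : Nonempty (H →g G) := by
  obtain ⟨G', ⟨iso⟩⟩ := Set.nonempty_of_ncard_ne_zero h.ne'
  exact ⟨G'.hom.comp iso.toHom⟩

namespace SimpleGraph

variable {α V : Type*} (F : SimpleGraph α) {m : ℕ} (e : α × Fin m ≃ V)

def blowup : SimpleGraph V := F.comap fun v => (e.symm v).1

def blowupHom : F.blowup e →g F := ⟨fun v => (e.symm v).1, id⟩

def transversal (f : α → Fin m) : F ↪g F.blowup e where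
  toFun a := e (a, f a)
  inj' _ _ h := congrArg Prod.fst (e.injective h)
  map_rel_iff' {a b} := by
    change F.Adj (e.symm (e (a, f a))).1 (e.symm (e (b, f b))).1 ↔ _
    simp

@[simp]
lemma transversal_apply (f : α → Fin m) (a : α) : F.transversal e f a = e (a, f a) := rfl

variable [Fintype α]

section Counting

variable [DecidableEq α] [DecidableRel F.Adj] [DecidableEq V]

lemma card_transversals_through_le (d : Sym2 V) :
    #{f : α → Fin m | ∃ a b, F.Adj a b ∧ s(F.transversal e f a, F.transversal e f b) = d}
      ≤ m ^ (Fintype.card α - 2) := by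
  rcases eq_empty_or_nonempty
    {f : α → Fin m | ∃ a b, F.Adj a b ∧ s(F.transversal e f a, F.transversal e f b) = d}
    with hempty | ⟨f₀, hf₀⟩
  · rw [hempty, card_empty]
    exact Nat.zero_le _
  simp only [mem_filter, mem_univ, true_and] at hf₀
  obtain ⟨a₀, b₀, hab₀, rfl⟩ := hf₀
  refine (card_le_card ?_).trans
    (card_filter_apply_eq_apply_eq_le hab₀.ne m (f₀ a₀) (f₀ b₀))
  intro f hf
  simp only [mem_filter, mem_univ, true_and] at hf ⊢
  obtain ⟨a, b, -, hd⟩ := hf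
  simp only [transversal_apply, Sym2.eq_iff, e.apply_eq_iff_eq, Prod.mk.injEq] at hd
  rcases hd with ⟨⟨rfl, ha⟩, rfl, hb⟩ | ⟨⟨rfl, ha⟩, rfl, hb⟩
  exacts [⟨ha, hb⟩, ⟨hb, ha⟩]

lemma exists_transversal_avoiding (h2 : 2 ≤ Fintype.card α) (D : Finset (Sym2 V))
    (hD : #D < m ^ 2) :
    ∃ f : α → Fin m, ∀ a b, F.Adj a b → s(F.transversal e f a, F.transversal e f b) ∉ D := by
  have hm : 0 < m := Nat.pos_of_ne_zero <| by rintro rfl; simp at hD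
  set bad : Finset (α → Fin m) := {f | ∃ a b, F.Adj a b ∧
    s(F.transversal e f a, F.transversal e f b) ∈ D}
  have hbad : bad ⊆ D.biUnion fun d => {f : α → Fin m | ∃ a b, F.Adj a b ∧
      s(F.transversal e f a, F.transversal e f b) = d} := by
    intro f hf
    obtain ⟨a, b, hab, hd⟩ := (mem_filter.mp hf).2
    exact mem_biUnion.mpr ⟨_, hd, mem_filter.mpr ⟨mem_univ _, a, b, hab, rfl⟩⟩
  have hcard : #bad < #(univ : Finset (α → Fin m)) :=
    calc #bad ≤ #D * m ^ (Fintype.card α - 2) :=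
          (card_le_card hbad).trans <| card_biUnion_le_card_mul _ _ _ fun d _ =>
            F.card_transversals_through_le e d
      _ < m ^ 2 * m ^ (Fintype.card α - 2) := by gcongr
      _ = #(univ : Finset (α → Fin m)) := by
          rw [← pow_add, Nat.add_sub_cancel' h2, card_univ, Fintype.card_fun, Fintype.card_fin]
  obtain ⟨f, -, hf⟩ := exists_mem_notMem_of_card_lt_card hcard
  refine ⟨f, fun a b hab hd => hf ?_⟩
  exact mem_filter.mpr ⟨mem_univ _, a, b, hab, hd⟩

end Counting

lemma containsCopy_of_ncard_edgeSet_diff_lt (h2 : 2 ≤ Fintype.card α) {G' : SimpleGraph V}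
    (hcard : ((F.blowup e).edgeSet \ G'.edgeSet).ncard < m ^ 2) :
    ContainsCopy F G' := by
  classical
  have : Finite V := Finite.of_equiv _ e
  have hfin := Set.toFinite ((F.blowup e).edgeSet \ G'.edgeSet)
  rw [Set.ncard_eq_toFinset_card _ hfin] at hcard
  obtain ⟨f, hf⟩ := F.exists_transversal_avoiding e h2 _ hcard
  refine ⟨⟨F.transversal e f, fun {a b} hab => ?_⟩, (F.transversal e f).injective⟩
  by_contra hnot
  exact hf a b hab (hfin.mem_toFinset.mpr ⟨(F.transversal e f).map_adj_iff.mpr hab, hnot⟩)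

theorem farFromFree_blowup (h2 : 2 ≤ Fintype.card α) :
    FarFromFree F (F.blowup e) (1 / (Fintype.card α : ℝ) ^ 2) := by
  intro G' _ hcard
  have hV : (Nat.card V : ℝ) = Fintype.card α * m := by
    rw [← Nat.card_congr e, Nat.card_prod, Nat.card_eq_fintype_card, Nat.card_fin]
    push_cast
    ring
  have hA : (Fintype.card α : ℝ) ≠ 0 := by positivity
  rw [hV, mul_pow, ← mul_assoc, one_div_mul_cancel (pow_ne_zero 2 hA), one_mul] at hcard
  exact F.containsCopy_of_ncard_edgeSet_diff_lt e h2 (by exact_mod_cast hcard)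

end SimpleGraph

theorem stmt_4_general {α β : Type*} [Fintype α]
    (F : SimpleGraph α) (H : SimpleGraph β)
    (hF : F.edgeSet.Nonempty) (habund : Abundant F H) :
    Nonempty (H →g F) := by
  obtain ⟨a, b, hab⟩ := SimpleGraph.ne_bot_iff_exists_adj.mp (SimpleGraph.edgeSet_nonempty.mp hF)
  have h2 : 2 ≤ Fintype.card α := Fintype.one_lt_card_iff.mpr ⟨a, b, hab.ne⟩
  set A := Fintype.card α
  have hA : (1 : ℝ) < A := by exact_mod_cast h2
  have hε₀ : 0 < 1 / (A : ℝ) ^ 2 := by positivity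
  have hε₁ : 1 / (A : ℝ) ^ 2 < 1 := by
    rw [div_lt_one (by positivity)]
    nlinarith
  obtain ⟨c, C, hc, -, habund⟩ := habund
  obtain ⟨n₀, hn₀⟩ := habund _ hε₀ hε₁
  let e : α × Fin (n₀ + 1) ≃ Fin (A * (n₀ + 1)) := Fintype.equivFinOfCardEq (by simp [A])
  have hcopies := hn₀ _ (by nlinarith) _ (F.farFromFree_blowup e h2)
  obtain ⟨φ⟩ := nonempty_hom_of_copyCount_pos <|
    Nat.cast_pos.mp ((by positivity : (0 : ℝ) < _).trans_le hcopies)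
  exact ⟨(F.blowupHom e).comp φ⟩

/-- If `F` has at least one edge and `H` is `F`-abundant, then
there is a homomorphism from `H` to `F`. -/
theorem stmt_4 {α β : Type*} [Fintype α] [Fintype β]
    (F : SimpleGraph α) (H : SimpleGraph β)
    (hF : F.edgeSet.Nonempty) (habund : Abundant F H) :
    Nonempty (H →g F) :=
  stmt_4_general F H hF habund
end

section
/- Let F be a graph with at least one edge. Then every bipartite graph H is F-abundant. -/
/-!
An `ε`-far graph `G` on `n` vertices has at least `εn²` edges: deleting all of them leaves no
copy of `F`. Jensen's inequality, applied to the degrees and then to the common neighbourhoods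
of `b`-tuples, gives at least `ε^{ab} n^{a+b}` homomorphisms of `K_{a,b}` into `G`
(Kővári–Sós–Turán), and a 2-colouring of `H` with classes of sizes `a, b` turns each of them
into a homomorphism of `H`. At most `|H|² n^{|H|-1}` maps are not injective, which is negligible
once `n ≫ |H|²/ε^{|H|²+1}`, and a copy of `H` is the image of at most `|H|^{|H|}` injective
homomorphisms.
-/

open Finset

lemma pow_mul_card_le_sum_pow {ι : Type*} {s : Finset ι} {f : ι → ℝ} {t : ℝ}
    (hf : ∀ i ∈ s, 0 ≤ f i) (ht : 0 ≤ t) (h : t * #s ≤ ∑ i ∈ s, f i) :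
    ∀ k : ℕ, t ^ k * #s ≤ ∑ i ∈ s, f i ^ k
  | 0 => by simp
  | k + 1 => by
    rcases s.eq_empty_or_nonempty with rfl | hs
    · simp
    have hcard : (0 : ℝ) < #s := by exact_mod_cast hs.card_pos
    calc t ^ (k + 1) * #s = (t * #s) ^ (k + 1) / (#s : ℝ) ^ k := by
          field_simp
          ring
      _ ≤ (∑ i ∈ s, f i) ^ (k + 1) / (#s : ℝ) ^ k := by gcongr
      _ ≤ ∑ i ∈ s, f i ^ (k + 1) := pow_sum_div_card_le_sum_pow hf k

lemma card_filter_forall_mem {A V : Type*} [Fintype A] [DecidableEq A] [Fintype V]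
    (s : Finset V) [DecidablePred fun f : A → V ↦ ∀ a, f a ∈ s] :
    #{f : A → V | ∀ a, f a ∈ s} = #s ^ Fintype.card A := by
  have : ({f : A → V | ∀ a, f a ∈ s} : Finset _) = Fintype.piFinset fun _ ↦ s := by
    ext f
    simp [Fintype.mem_piFinset]
  simp [this]

lemma card_filter_apply_eq_apply_le {β V : Type*} [Fintype β] [DecidableEq β] [Fintype V]
    [DecidableEq V] {x y : β} (hxy : x ≠ y) :
    #{f : β → V | f x = f y} ≤ Fintype.card V ^ (Fintype.card β - 1) := by
  have hrestrict : Set.InjOn (fun (f : β → V) (z : {z // z ≠ y}) ↦ f z) {f | f x = f y} := by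
    intro f (hf : f x = f y) g (hg : g x = g y) hfg
    funext z
    by_cases hz : z = y
    · subst hz
      simpa [← hf, ← hg] using congrFun hfg ⟨x, hxy⟩
    · exact congrFun hfg ⟨z, hz⟩
  calc #{f : β → V | f x = f y} ≤ #(univ : Finset ({z // z ≠ y} → V)) :=
        card_le_card_of_injOn _ (fun _ _ ↦ mem_univ _) (by simpa using hrestrict)
    _ = Fintype.card V ^ (Fintype.card β - 1) := by
        simp [Fintype.card_subtype_compl]

lemma card_filter_not_injective_le {β V : Type*} [Fintype β] [DecidableEq β] [Fintype V]
    [DecidableEq V] :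
    #{f : β → V | ¬ Function.Injective f}
      ≤ Fintype.card β ^ 2 * Fintype.card V ^ (Fintype.card β - 1) := by
  have hsub : ({f : β → V | ¬ Function.Injective f} : Finset _)
      ⊆ (univ : Finset β).offDiag.biUnion fun q ↦ {f : β → V | f q.1 = f q.2} := by
    intro f hf
    obtain ⟨x, y, hfxy, hxy⟩ := Function.not_injective_iff.mp (mem_filter.mp hf).2
    exact mem_biUnion.mpr ⟨(x, y), by simpa using hxy, by simpa using hfxy⟩
  calc _ ≤ _ := card_le_card hsub
    _ ≤ ∑ q ∈ (univ : Finset β).offDiag, #{f : β → V | f q.1 = f q.2} := card_biUnion_le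
    _ ≤ ∑ _q ∈ (univ : Finset β).offDiag, Fintype.card V ^ (Fintype.card β - 1) :=
        sum_le_sum fun q hq ↦ card_filter_apply_eq_apply_le (mem_offDiag.mp hq).2.2
    _ ≤ _ := by
        rw [sum_const, smul_eq_mul, sq, ← Fintype.card_prod]
        exact Nat.mul_le_mul_right _ (card_le_univ _)

lemma card_filter_not_injective_mul_two_le {β V : Type*} [Fintype β] [DecidableEq β] [Fintype V]
    [DecidableEq V] {δ : ℝ} (hδ₀ : 0 ≤ δ)
    (hδ : 2 * (Fintype.card β : ℝ) ^ 2 ≤ δ * Fintype.card V) :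
    (#{f : β → V | ¬ Function.Injective f} : ℝ) * 2
      ≤ δ * (Fintype.card V : ℝ) ^ Fintype.card β := by
  set v := Fintype.card β
  set N := Fintype.card V
  have hcard : #{f : β → V | ¬ Function.Injective f} ≤ v ^ 2 * N ^ (v - 1) :=
    card_filter_not_injective_le
  rcases Nat.eq_zero_or_pos v with hv | hv
  · simp only [hv, ne_eq, OfNat.ofNat_ne_zero, not_false_eq_true, zero_pow, zero_mul,
      nonpos_iff_eq_zero] at hcard
    rw [hcard, Nat.cast_zero, zero_mul]
    positivity
  calc (#{f : β → V | ¬ Function.Injective f} : ℝ) * 2 ≤ 2 * v ^ 2 * N ^ (v - 1) := by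
        exact_mod_cast (Nat.mul_le_mul_right 2 hcard).trans_eq (by ring)
    _ ≤ δ * N * N ^ (v - 1) := by gcongr
    _ = _ := by rw [mul_assoc, ← pow_succ', Nat.sub_add_cancel hv]

lemma copyCount_eq_copyCount {β V : Type*} [Fintype V] (H : SimpleGraph β) (G : SimpleGraph V) :
    copyCount H G = G.copyCount H := by
  classical
  rw [copyCount, SimpleGraph.copyCount, ← Set.ncard_coe_finset, coe_filter_univ]

lemma FarFromFree.mul_sq_le_card_edgeFinset {α V : Type*} [Fintype V] [DecidableEq V]
    {F : SimpleGraph α} {G : SimpleGraph V} [DecidableRel G.Adj] {ε : ℝ}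
    (hF : F.edgeSet.Nonempty) (hG : FarFromFree F G ε) :
    ε * Fintype.card V ^ 2 ≤ #G.edgeFinset := by
  by_contra! hlt
  obtain ⟨f, -⟩ := hG ⊥ bot_le <| by
    simpa [Nat.card_eq_fintype_card, ← SimpleGraph.coe_edgeFinset] using hlt
  obtain ⟨e, he⟩ := hF
  induction e using Sym2.ind with
  | _ x y => simpa using f.map_adj he

namespace SimpleGraph

/-- Homomorphisms from the complete bipartite graph on `A ⊕ B` to `G`, given by their
restrictions to the two sides. -/
def bicliqueMaps {V : Type*} [Fintype V] (G : SimpleGraph V) [DecidableRel G.Adj] (A B : Type*)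
    [Fintype A] [DecidableEq A] [Fintype B] [DecidableEq B] : Finset ((A → V) × (B → V)) :=
  {p | ∀ a b, G.Adj (p.1 a) (p.2 b)}

def homFinset {β V : Type*} [Fintype β] [DecidableEq β] [Fintype V] (H : SimpleGraph β)
    (G : SimpleGraph V) [DecidableRel H.Adj] [DecidableRel G.Adj] : Finset (β → V) :=
  {f | ∀ x y, H.Adj x y → G.Adj (f x) (f y)}

section Counting

variable {V A B β : Type*} [Fintype V] [Fintype A] [DecidableEq A]
  [Fintype B] [DecidableEq B] [Fintype β] [DecidableEq β] (G : SimpleGraph V) [DecidableRel G.Adj]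

theorem card_bicliqueMaps_le_card_homFinset {H : SimpleGraph β} [DecidableRel H.Adj]
    (c : H.Coloring (Fin 2)) :
    #(G.bicliqueMaps {x // c x = 0} {x // ¬ c x = 0}) ≤ #(H.homFinset G) := by
  refine card_le_card_of_injOn (Equiv.piEquivPiSubtypeProd (fun x ↦ c x = 0) fun _ ↦ V).symm
    (fun p hp ↦ ?_) (Equiv.injective _).injOn
  simp only [bicliqueMaps, homFinset, coe_filter, mem_univ, true_and, Set.mem_ofPred_eq] at hp ⊢
  intro x y hxy
  have hc := c.valid hxy
  simp only [Equiv.piEquivPiSubtypeProd, Equiv.coe_fn_symm_mk]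
  by_cases hx : c x = 0
  · have hy : ¬ c y = 0 := hx ▸ hc.symm
    rw [dif_pos hx, dif_neg hy]
    exact hp _ _
  · have hy : c y = 0 := by omega
    rw [dif_neg hx, dif_pos hy]
    exact (hp _ _).symm

variable [DecidableEq V]

lemma sum_card_commonNbrs_eq_sum_degree_pow :
    ∑ h : B → V, #{v | ∀ b, G.Adj v (h b)} = ∑ v, G.degree v ^ Fintype.card B := by
  simp only [card_filter]
  rw [sum_comm]
  refine sum_congr rfl fun v _ ↦ ?_
  rw [← card_filter, ← card_neighborFinset_eq_degree, ← card_filter_forall_mem]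
  simp [mem_neighborFinset]

lemma card_bicliqueMaps_eq_sum :
    #(G.bicliqueMaps A B) = ∑ h : B → V, #{v | ∀ b, G.Adj v (h b)} ^ Fintype.card A := by
  rw [bicliqueMaps, card_eq_sum_card_fiberwise (f := Prod.snd) (t := univ) fun _ _ ↦ mem_univ _]
  refine sum_congr rfl fun h _ ↦ ?_
  rw [← card_filter_forall_mem]
  refine card_nbij' Prod.fst (fun g ↦ (g, h)) ?_ ?_ ?_ ?_ <;> simp only [Set.MapsTo,
    Set.LeftInvOn, coe_filter, mem_filter, mem_univ, true_and, Set.mem_ofPred_eq]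
  · rintro ⟨g, _⟩ ⟨hg, rfl⟩ a
    simpa using hg a
  · intro g hg
    simpa using hg
  · rintro ⟨g, _⟩ ⟨-, rfl⟩
    rfl
  · exact fun _ _ ↦ trivial

theorem pow_mul_pow_le_card_bicliqueMaps {ε : ℝ} (hε : 0 ≤ ε)
    (hG : ε * Fintype.card V ^ 2 ≤ ∑ v, (G.degree v : ℝ)) :
    ε ^ (Fintype.card A * Fintype.card B)
        * (Fintype.card V : ℝ) ^ (Fintype.card A + Fintype.card B) ≤ #(G.bicliqueMaps A B) := by
  set N : ℝ := (Fintype.card V : ℝ)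
  have hdeg : (ε * N) ^ Fintype.card B * N ≤ ∑ v, (G.degree v : ℝ) ^ Fintype.card B :=
    pow_mul_card_le_sum_pow (fun _ _ ↦ by positivity) (by positivity)
      (by simpa [N, sq, mul_assoc] using hG) _
  have hcommon : ε ^ Fintype.card B * N * #(univ : Finset (B → V))
      ≤ ∑ h : B → V, (#{v | ∀ b, G.Adj v (h b)} : ℝ) := by
    rw [← Nat.cast_sum, sum_card_commonNbrs_eq_sum_degree_pow, card_univ, Fintype.card_fun]
    push_cast
    linear_combination hdeg
  have := pow_mul_card_le_sum_pow (fun _ _ ↦ by positivity) (by positivity) hcommon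
    (Fintype.card A)
  rw [card_bicliqueMaps_eq_sum]
  push_cast
  rw [card_univ, Fintype.card_fun] at this
  push_cast at this
  linear_combination this

theorem pow_mul_pow_le_card_homFinset_of_colorable_two {H : SimpleGraph β}
    [DecidableRel H.Adj] (hH : H.Colorable 2) {ε : ℝ} (hε₀ : 0 ≤ ε) (hε₁ : ε ≤ 1)
    (hG : ε * Fintype.card V ^ 2 ≤ ∑ v, (G.degree v : ℝ)) :
    ε ^ (Fintype.card β ^ 2) * (Fintype.card V : ℝ) ^ Fintype.card β ≤ #(H.homFinset G) := by
  obtain ⟨c⟩ := hH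
  set a := Fintype.card {x // c x = 0}
  set b := Fintype.card {x // ¬ c x = 0}
  have hcard : a + b = Fintype.card β := by
    rw [← Fintype.card_sum, Fintype.card_congr (Equiv.sumCompl _)]
  have hexp : a * b ≤ Fintype.card β ^ 2 :=
    sq (Fintype.card β) ▸ Nat.mul_le_mul (Fintype.card_subtype_le _) (Fintype.card_subtype_le _)
  calc ε ^ (Fintype.card β ^ 2) * (Fintype.card V : ℝ) ^ Fintype.card β
      ≤ ε ^ (a * b) * (Fintype.card V : ℝ) ^ (a + b) := by
        rw [hcard]
        gcongr ?_ * _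
        exact pow_le_pow_of_le_one hε₀ hε₁ hexp
    _ ≤ _ := G.pow_mul_pow_le_card_bicliqueMaps hε₀ hG
    _ ≤ _ := by exact_mod_cast G.card_bicliqueMaps_le_card_homFinset c

end Counting

lemma card_filter_injective_homFinset_le_labelledCopyCount {β V : Type*} [Fintype β]
    [DecidableEq β] [Fintype V] [DecidableEq V] (H : SimpleGraph β) (G : SimpleGraph V)
    [DecidableRel H.Adj] [DecidableRel G.Adj] :
    #{f ∈ H.homFinset G | Function.Injective f} ≤ G.labelledCopyCount H := by
  rw [labelledCopyCount, Fintype.card_eq_nat_card]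
  classical
  rw [Nat.card_eq_fintype_card, ← card_univ]
  calc _ ≤ #((univ : Finset (Copy H G)).image (⇑)) := card_le_card fun f hf ↦ by
        simp only [homFinset, mem_filter, mem_univ, true_and] at hf
        exact mem_image.mpr ⟨⟨⟨f, hf.1 _ _⟩, hf.2⟩, mem_univ _, rfl⟩
    _ ≤ _ := card_image_le

lemma Copy.range_eq_toSubgraph_verts {β V : Type*} {H : SimpleGraph β} {G : SimpleGraph V}
    (c : Copy H G) : Set.range c = c.toSubgraph.verts := by
  simp [Copy.toSubgraph, Subgraph.map_verts, Set.image_univ]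

/-- Two copies with the same image differ by a self-map of the vertex type of `H`. -/
theorem labelledCopyCount_le_mul_copyCount {β V : Type*} [Fintype β] [Fintype V]
    (H : SimpleGraph β) (G : SimpleGraph V) :
    G.labelledCopyCount H ≤ Fintype.card β ^ Fintype.card β * G.copyCount H := by
  classical
  rw [labelledCopyCount, copyCount_eq_card_image_copyToSubgraph, ← card_univ]
  refine card_le_mul_card_image _ _ fun S hS ↦ ?_
  obtain ⟨c₀, -, rfl⟩ := mem_image.mp hS
  have hfactor : ∀ c ∈ ({c | c.toSubgraph = c₀.toSubgraph} : Finset (Copy H G)),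
      ⇑c ∈ (univ : Finset (β → β)).image (⇑c₀ ∘ ·) := by
    intro c hc
    have hrange : Set.range c ⊆ Set.range c₀ := by
      rw [c.range_eq_toSubgraph_verts, c₀.range_eq_toSubgraph_verts, (mem_filter.mp hc).2]
    obtain ⟨σ, hσ⟩ := Set.range_subset_range_iff_exists_comp.mp hrange
    exact mem_image.mpr ⟨σ, mem_univ _, hσ.symm⟩
  calc _ = #((({c | c.toSubgraph = c₀.toSubgraph} : Finset (Copy H G))).image (⇑)) :=
        (card_image_of_injective _ DFunLike.coe_injective).symm
    _ ≤ #((univ : Finset (β → β)).image (⇑c₀ ∘ ·)) := card_le_card fun _ hf ↦ by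
        obtain ⟨c, hc, rfl⟩ := mem_image.mp hf
        exact hfactor c hc
    _ ≤ _ := card_image_le.trans_eq (by simp)

theorem pow_mul_pow_le_copyCount_of_colorable_two {β V : Type*} [Fintype β] [DecidableEq β]
    [Fintype V] [DecidableEq V] {H : SimpleGraph β} [DecidableRel H.Adj]
    (hH : H.Colorable 2) (G : SimpleGraph V) [DecidableRel G.Adj] {ε : ℝ} (hε₀ : 0 ≤ ε)
    (hε₁ : ε ≤ 1) (hG : ε * Fintype.card V ^ 2 ≤ #G.edgeFinset)
    (hV : 2 * (Fintype.card β : ℝ) ^ 2 ≤ ε ^ (Fintype.card β ^ 2 + 1) * Fintype.card V) :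
    ε ^ (Fintype.card β ^ 2 + 1) * (Fintype.card V : ℝ) ^ Fintype.card β
      ≤ 2 * Fintype.card β ^ Fintype.card β * G.copyCount H := by
  set v := Fintype.card β
  set N := Fintype.card V
  have hdeg : ε * N ^ 2 ≤ ∑ w, (G.degree w : ℝ) := by
    have hsum : ∑ w, (G.degree w : ℝ) = 2 * #G.edgeFinset := by
      exact_mod_cast G.sum_degrees_eq_twice_card_edges
    have : (0 : ℝ) ≤ #G.edgeFinset := Nat.cast_nonneg _
    linarith
  have hhoms : ε ^ v ^ 2 * (N : ℝ) ^ v ≤ #(H.homFinset G) :=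
    G.pow_mul_pow_le_card_homFinset_of_colorable_two hH hε₀ hε₁ hdeg
  have hsplit : (#(H.homFinset G) : ℝ) ≤ #{f ∈ H.homFinset G | Function.Injective f}
      + #{f : β → V | ¬ Function.Injective f} := by
    rw [← card_filter_add_card_filter_not (s := H.homFinset G) Function.Injective]
    exact_mod_cast Nat.add_le_add_left (card_le_card (filter_subset_filter _ (subset_univ _))) _
  have hinj : (#{f ∈ H.homFinset G | Function.Injective f} : ℝ) ≤ v ^ v * G.copyCount H := by
    exact_mod_cast (card_filter_injective_homFinset_le_labelledCopyCount H G).trans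
      (labelledCopyCount_le_mul_copyCount H G)
  have hnoninj : (#{f : β → V | ¬ Function.Injective f} : ℝ) * 2 ≤ ε ^ (v ^ 2 + 1) * N ^ v :=
    card_filter_not_injective_mul_two_le (by positivity) hV
  have hpow : ε ^ (v ^ 2 + 1) * (N : ℝ) ^ v ≤ ε ^ v ^ 2 * N ^ v := by
    gcongr ?_ * _
    exact pow_le_pow_of_le_one hε₀ hε₁ (by omega)
  linarith

end SimpleGraph

theorem stmt_6_general {α β : Type*} [Fintype β]
    (F : SimpleGraph α) (H : SimpleGraph β)
    (hF : F.edgeSet.Nonempty) (hbip : H.Colorable 2) :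
    Abundant F H := by
  classical
  set v := Fintype.card β
  have hv : 0 < v ^ v := Nat.pow_self_pos
  refine ⟨1 / (2 * (v ^ v : ℕ)), (v ^ 2 + 1 : ℕ), by positivity, by positivity,
    fun ε hε₀ hε₁ ↦ ⟨⌈2 * (v : ℝ) ^ 2 / ε ^ (v ^ 2 + 1)⌉₊, fun n hn G hG ↦ ?_⟩⟩
  have hn : 2 * (v : ℝ) ^ 2 ≤ ε ^ (v ^ 2 + 1) * n := by
    rw [← div_le_iff₀' (by positivity)]
    exact (Nat.le_ceil _).trans (by exact_mod_cast hn)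
  have hcount := SimpleGraph.pow_mul_pow_le_copyCount_of_colorable_two hbip G hε₀.le hε₁.le
    (by simpa using hG.mul_sq_le_card_edgeFinset hF) (by simpa using hn)
  simp only [Fintype.card_fin] at hcount
  rw [copyCount_eq_copyCount, Real.rpow_natCast, Nat.card_eq_fintype_card,
    div_mul_eq_mul_div, div_mul_eq_mul_div, div_le_iff₀ (by positivity)]
  push_cast
  linarith

/-- If `F` has at least one edge, then every bipartite graph
(vertex set partitioned into two independent sets, i.e. 2-colourable) is
`F`-abundant. -/
theorem stmt_6 {α β : Type*} [Fintype α] [Fintype β]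
    (F : SimpleGraph α) (H : SimpleGraph β)
    (hF : F.edgeSet.Nonempty) (hbip : H.Colorable 2) :
    Abundant F H :=
  stmt_6_general F H hF hbip
end

section
/- Let F be a graph and let G be a graph that is uniformly ε-far from F-free, with witnessing F-partition (V_i : i ∈ V(F)). Then: (a) G is (ε/|V(F)|)-far from F-free; (b) for every edge ij of F, every vertex of V_i has at least ε·|V(G)| neighbours in V_j; and (c) for every non-isolated vertex i of F, |V_i| ≥ ε·|V(G)|. -/
/-- `f` is a copy map from `F` into `G`: an injective map sending edges to edges. -/
def IsCopyMap {α β : Type*} (F : SimpleGraph α) (G : SimpleGraph β) (f : α → β) : Prop :=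
  Function.Injective f ∧ ∀ a b, F.Adj a b → G.Adj (f a) (f b)

/-- `G` is uniformly `ε`-far from `F`-free, with witnessing `F`-partition given by the
homomorphism `π : G →g F` (the parts are `V_i = π⁻¹(i)`): there is a collection `𝒞` of
pairwise edge-disjoint copies of `F` in `G`, each placed so that the vertex playing the
role of `i ∈ V(F)` lies in `V_i`, such that every vertex of `G` lies in at least
`ε·|V(G)|` copies of `F` from `𝒞`. -/
def UniformlyFarWith {α β : Type*} (F : SimpleGraph α) (G : SimpleGraph β)
    (π : G →g F) (ε : ℝ) : Prop :=
  ∃ 𝒞 : Set (α → β),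
    (∀ f ∈ 𝒞, IsCopyMap F G f ∧ ∀ a, π (f a) = a) ∧
    (∀ f ∈ 𝒞, ∀ g ∈ 𝒞, f ≠ g → ∀ a b a' b', F.Adj a b → F.Adj a' b' →
      s(f a, f b) ≠ s(g a', g b')) ∧
    (∀ v : β, ε * (Nat.card β : ℝ) ≤ (({x ∈ 𝒞 | v ∈ Set.range x}).ncard : ℝ))

/-- An `F`-coloured graph `(H, σ)` is `F`-abundant: there are constants `c, C > 0` such
that for every `ε ∈ (0,1)` and all sufficiently large `n`, every `n`-vertex graph `G`
that is uniformly `ε`-far from `F`-free with `F`-partition induced by `π : G →g F`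
contains at least `c·ε^C·n^{|V(H)|}` injective homomorphisms of `H` into `G` mapping
each vertex `v` of `H` into the part `V_{σ(v)}`. -/
def ColouredAbundant {α β : Type*} (F : SimpleGraph α) (H : SimpleGraph β)
    (σ : H →g F) : Prop :=
  ∃ c C : ℝ, 0 < c ∧ 0 < C ∧ ∀ ε : ℝ, 0 < ε → ε < 1 → ∃ n₀ : ℕ, ∀ n : ℕ, n₀ ≤ n →
    ∀ G : SimpleGraph (Fin n), ∀ π : G →g F, UniformlyFarWith F G π ε →
      c * ε ^ C * (n : ℝ) ^ (Nat.card β) ≤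
        (({f : β → Fin n | IsCopyMap H G f ∧ ∀ v, π (f v) = σ v}).ncard : ℝ)

/-- If `G` is uniformly `ε`-far from `F`-free with witnessing
`F`-partition given by `π : G →g F`, then (a) `G` is `(ε/|V(F)|)`-far from
`F`-free, (b) for every edge `ij` of `F`, every vertex of `V_i` has at least
`ε·|V(G)|` neighbours in `V_j`, and (c) `|V_i| ≥ ε·|V(G)|` for every non-isolated
vertex `i` of `F`. -/
theorem stmt_7 {α β : Type*} [Fintype α] [Fintype β]
    (F : SimpleGraph α) (G : SimpleGraph β) (ε : ℝ) (hε : 0 < ε) (π : G →g F)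
    (h : UniformlyFarWith F G π ε) :
    FarFromFree F G (ε / (Nat.card α : ℝ)) ∧
    (∀ i j : α, F.Adj i j → ∀ v : β, π v = i →
      ε * (Nat.card β : ℝ) ≤ (({u : β | G.Adj v u ∧ π u = j}).ncard : ℝ)) ∧
    (∀ i : α, (∃ j, F.Adj i j) →
      ε * (Nat.card β : ℝ) ≤ (({v : β | π v = i}).ncard : ℝ)) := by
    classical
  obtain ⟨𝒞, h1, h2, h3⟩ := h
  -- Part (b)
  have hb : ∀ i j : α, F.Adj i j → ∀ v : β, π v = i →
      ε * (Nat.card β : ℝ) ≤ (({u : β | G.Adj v u ∧ π u = j}).ncard : ℝ) := by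
    intro i j hij v hv
    refine (h3 v).trans ?_
    have hle : ({x ∈ 𝒞 | v ∈ Set.range x}).ncard ≤
        ({u : β | G.Adj v u ∧ π u = j}).ncard := by
      apply Set.ncard_le_ncard_of_injOn (fun f => f j)
      · rintro f ⟨hf, a, rfl⟩
        obtain ⟨⟨finj, fadj⟩, fsec⟩ := h1 f hf
        have ha : a = i := by rw [← fsec a]; exact hv
        subst ha
        exact ⟨fadj a j hij, fsec j⟩
      · rintro f ⟨hf, a, hfa⟩ g ⟨hg, b, hgb⟩ hfg
        by_contra hne
        have ha : a = i := by rw [← (h1 f hf).2 a, hfa]; exact hv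
        have hb' : b = i := by rw [← (h1 g hg).2 b, hgb]; exact hv
        have hfi : f i = v := ha ▸ hfa
        have hgi : g i = v := hb' ▸ hgb
        exact h2 f hf g hg hne i j i j hij hij (by rw [hfi, hgi, show f j = g j from hfg])
    exact_mod_cast hle
  -- Part (c)
  have hc : ∀ i : α, (∃ j, F.Adj i j) →
      ε * (Nat.card β : ℝ) ≤ (({v : β | π v = i}).ncard : ℝ) := by
    rintro i ⟨j, hij⟩
    rcases isEmpty_or_nonempty β with hβ | hβ
    · have : Nat.card β = 0 := by simp [Nat.card_eq_fintype_card]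
      rw [this]
      simp
    · have hβpos : (0 : ℝ) < (Nat.card β : ℝ) := by
        exact_mod_cast Nat.card_pos
      obtain ⟨v⟩ := hβ
      have hpos : (0 : ℝ) < (({x ∈ 𝒞 | v ∈ Set.range x}).ncard : ℝ) :=
        lt_of_lt_of_le (mul_pos hε hβpos) (h3 v)
      have hne : ({x ∈ 𝒞 | v ∈ Set.range x}).Nonempty := by
        rw [Set.nonempty_iff_ne_empty]
        intro hemp
        rw [hemp] at hpos
        simp at hpos
      obtain ⟨f, hf, -⟩ := hne
      refine (hb j i hij.symm (f j) ((h1 f hf).2 j)).trans ?_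
      have : ({u : β | G.Adj (f j) u ∧ π u = i}).ncard ≤ ({v : β | π v = i}).ncard :=
        Set.ncard_le_ncard (fun u hu => hu.2) (Set.toFinite _)
      exact_mod_cast this
  refine ⟨?_, hb, hc⟩
  -- Part (a)
  intro G' hGle hD
  set D := G.edgeSet \ G'.edgeSet with hDdef
  have hDnn : (0 : ℝ) ≤ (D.ncard : ℝ) := Nat.cast_nonneg _
  have hRpos : (0 : ℝ) < ε / (Nat.card α : ℝ) * (Nat.card β : ℝ) ^ 2 :=
    lt_of_le_of_lt hDnn hD
  have hαpos : (0 : ℝ) < (Nat.card α : ℝ) := by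
    by_contra hc'
    push_neg at hc'
    have : (Nat.card α : ℝ) = 0 := le_antisymm hc' (Nat.cast_nonneg _)
    rw [this, div_zero, zero_mul] at hRpos
    exact lt_irrefl _ hRpos
  have hβpos : (0 : ℝ) < (Nat.card β : ℝ) := by
    by_contra hc'
    push_neg at hc'
    have : (Nat.card β : ℝ) = 0 := le_antisymm hc' (Nat.cast_nonneg _)
    rw [this] at hRpos
    norm_num at hRpos
  have hβne : Nonempty β := by
    have : 0 < Nat.card β := by exact_mod_cast hβpos
    exact Nat.card_pos_iff.mp this |>.1
  have hfin : 𝒞.Finite := Set.toFinite _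
  set C := hfin.toFinset with hC
  -- double counting: ε|β|² ≤ |𝒞|·|α|
  have hcount : ε * (Nat.card β : ℝ) ^ 2 ≤ (𝒞.ncard : ℝ) * (Nat.card α : ℝ) := by
    have step1 : ∀ v : β, ({x ∈ 𝒞 | v ∈ Set.range x}).ncard =
        (C.filter (fun f => v ∈ Set.range f)).card := by
      intro v
      rw [← Set.ncard_coe_finset]
      congr 1
      ext f
      simp only [hC, Finset.coe_filter, Set.Finite.mem_toFinset, Set.mem_setOf_eq]
    have hswap : ∑ v : β, (C.filter (fun f => v ∈ Set.range f)).card =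
        ∑ f ∈ C, (Finset.univ.filter (fun v : β => v ∈ Set.range f)).card := by
      simp_rw [Finset.card_filter]
      rw [Finset.sum_comm]
    have himg : ∀ f ∈ C, (Finset.univ.filter (fun v : β => v ∈ Set.range f)).card
        = Nat.card α := by
      intro f hf
      have hinj : Function.Injective f := (h1 f (hfin.mem_toFinset.mp hf)).1.1
      have heq : Finset.univ.filter (fun v : β => v ∈ Set.range f)
          = Finset.univ.image f := by
        ext v; simp [Set.mem_range, eq_comm]
      rw [heq, Finset.card_image_of_injective _ hinj, Finset.card_univ,
        Nat.card_eq_fintype_card]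
    have hsumconst : ∑ v : β, (C.filter (fun f => v ∈ Set.range f)).card
        = C.card * Nat.card α := by
      rw [hswap, Finset.sum_congr rfl himg, Finset.sum_const, smul_eq_mul]
    have hCcard : C.card = 𝒞.ncard := by
      rw [← Set.ncard_coe_finset, hfin.coe_toFinset]
    have hsum : ε * (Nat.card β : ℝ) * (Nat.card β : ℝ) ≤
        ((∑ v : β, (C.filter (fun f => v ∈ Set.range f)).card : ℕ) : ℝ) := by
      push_cast
      calc ε * (Nat.card β : ℝ) * (Nat.card β : ℝ)
          = ∑ _v : β, ε * (Nat.card β : ℝ) := by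
            rw [Finset.sum_const, Finset.card_univ, Nat.card_eq_fintype_card,
              nsmul_eq_mul]
            ring
        _ ≤ _ := Finset.sum_le_sum (fun v _ => by
            rw [← step1 v]; exact_mod_cast h3 v)
    rw [hsumconst, hCcard] at hsum
    calc ε * (Nat.card β : ℝ) ^ 2 = ε * (Nat.card β : ℝ) * (Nat.card β : ℝ) := by ring
      _ ≤ ((𝒞.ncard * Nat.card α : ℕ) : ℝ) := hsum
      _ = (𝒞.ncard : ℝ) * (Nat.card α : ℝ) := by push_cast; ring
  have h𝒞lb : ε / (Nat.card α : ℝ) * (Nat.card β : ℝ) ^ 2 ≤ (𝒞.ncard : ℝ) := by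
    rw [div_mul_eq_mul_div, div_le_iff₀ hαpos]
    linarith [hcount]
  -- destroyed copies inject into deleted edges
  set Bad := {f ∈ 𝒞 | ∃ p : α × α, F.Adj p.1 p.2 ∧ s(f p.1, f p.2) ∈ D} with hBad
  have hBadle : Bad.ncard ≤ D.ncard := by
    set φ : (α → β) → Sym2 β := fun f =>
      if hp : ∃ p : α × α, F.Adj p.1 p.2 ∧ s(f p.1, f p.2) ∈ D
      then s(f hp.choose.1, f hp.choose.2)
      else s(Classical.arbitrary β, Classical.arbitrary β) with hφ
    apply Set.ncard_le_ncard_of_injOn φ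
    · rintro f ⟨hf, hp⟩
      simp only [hφ, dif_pos hp]
      exact hp.choose_spec.2
    · rintro f ⟨hf, hpf⟩ g ⟨hg, hpg⟩ hfg
      by_contra hne
      simp only [hφ, dif_pos hpf, dif_pos hpg] at hfg
      exact h2 f hf g hg hne _ _ _ _ hpf.choose_spec.1 hpg.choose_spec.1 hfg
  have hlt : Bad.ncard < 𝒞.ncard := by
    have : (Bad.ncard : ℝ) < (𝒞.ncard : ℝ) :=
      lt_of_le_of_lt (Nat.cast_le.mpr hBadle) (lt_of_lt_of_le hD h𝒞lb)
    exact_mod_cast this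
  have hnot : ¬ 𝒞 ⊆ Bad := fun hsub =>
    absurd (Set.ncard_le_ncard hsub (Set.toFinite _)) (not_le.mpr hlt)
  obtain ⟨f, hf, hfbad⟩ := Set.not_subset.mp hnot
  obtain ⟨⟨finj, fadj⟩, fsec⟩ := h1 f hf
  refine ⟨⟨f, ?_⟩, finj⟩
  intro a b hab
  have hG : G.Adj (f a) (f b) := fadj a b hab
  have hnotD : s(f a, f b) ∉ D := fun hmem => hfbad ⟨hf, ⟨(a, b), hab, hmem⟩⟩
  have hmem : s(f a, f b) ∈ G'.edgeSet := by
    by_contra hnot'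
    exact hnotD ⟨(SimpleGraph.mem_edgeSet G).mpr hG, hnot'⟩
  exact (SimpleGraph.mem_edgeSet G').mp hmem
end

section
/- Let F be a graph with at least one edge and let G be a graph such that there is no homomorphism from F to G. Let (H^m, σ_m) for m ≥ 1 be the sequence of F-coloured graphs obtained from the iterated gluing construction starting from any F-coloured graph (H, σ) with σ surjective. Then there exists m₀ (depending only on F and G) such that for all m ≥ m₀ there is no homomorphism from H^m to G. -/
/-- One gluing step: `(H, σ)_e` for the edge `e = ab` of `F` is the disjoint union of
two copies of `(H, σ)` with all edges added between `σ⁻¹(a)` in one copy and `σ⁻¹(b)`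
in the other copy (both ways). -/
def glueStep {β α : Type} (H : SimpleGraph β) (σ : β → α) (a b : α) :
    SimpleGraph (β ⊕ β) where
  Adj x y :=
    match x, y with
    | Sum.inl x, Sum.inl y => H.Adj x y
    | Sum.inr x, Sum.inr y => H.Adj x y
    | Sum.inl x, Sum.inr y => (σ x = a ∧ σ y = b) ∨ (σ x = b ∧ σ y = a)
    | Sum.inr x, Sum.inl y => (σ y = a ∧ σ x = b) ∨ (σ y = b ∧ σ x = a)
  symm := by
    constructor
    rintro (x | x) (y | y) h
    · exact H.adj_symm h
    · exact h
    · exact h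
    · exact H.adj_symm h
  loopless := by
    constructor
    rintro (x | x) h
    · exact H.irrefl h
    · exact H.irrefl h

/-- The iterated gluing construction: `iterGlue H σ ens m` is the `F`-coloured graph
`(H^{m+1}, σ_{m+1})` obtained from `(H^1, σ_1) = (H, σ)` by `m` gluing steps, the
`(j+1)`-st step gluing along the edge `ens j` of `F`. -/
def iterGlue {β α : Type} (H : SimpleGraph β) (σ : β → α) (ens : ℕ → α × α) :
    (m : ℕ) → Σ V : Type, SimpleGraph V × (V → α)
  | 0 => ⟨β, H, σ⟩
  | m + 1 =>
      let p := iterGlue H σ ens m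
      ⟨p.1 ⊕ p.1, glueStep p.2.1 p.2.2 (ens m).1 (ens m).2, Sum.elim p.2.2 p.2.2⟩

/-!
Record a homomorphism `φ : H^m → G` by its profile, the image under `φ` of each colour class.
The profiles realisable at level `m`, closed upwards, form a decreasing sequence of subsets of
the finite set `α → Set γ`, so if every `H^m` maps to `G` they stabilise from some level `M` on.
Take a minimal realisable profile `f` at level `M` and an edge `ab` of `F` glued at a step
`j ≥ M`. A homomorphism on `H^{j+1}` with profile below `f` restricts on both copies of `H^j`
to homomorphisms with profile below `f`, hence equal to `f` by minimality; the complete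
bipartite graph glued between the copies then makes every point of `f a` adjacent to every
point of `f b`. Choosing a point of each (nonempty) `f a` gives a homomorphism `F → G`.
-/

variable {α β γ V : Type}

namespace glueStep

variable (H : SimpleGraph β) (σ : β → α) (a b : α)

def inl : H →g glueStep H σ a b := ⟨Sum.inl, id⟩

def inr : H →g glueStep H σ a b := ⟨Sum.inr, id⟩

variable {H σ a b} in
theorem adj_inl_inr {x y : β} :
    (glueStep H σ a b).Adj (.inl x) (.inr y) ↔ s(σ x, σ y) = s(a, b) :=
  Sym2.eq_iff.symm

end glueStep

theorem Function.Periodic.exists_ge_apply_eq {δ : Type*} {f : ℕ → δ} {k : ℕ}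
    (hf : Function.Periodic f k) (hk : k ≠ 0) (j M : ℕ) : ∃ i ≥ M, f i = f j :=
  ⟨j + M * k, by nlinarith [Nat.one_le_iff_ne_zero.mpr hk], by simpa using hf.nat_mul M j⟩

section Profiles

variable {K : SimpleGraph V} {G : SimpleGraph γ}

def colourProfile (c : V → α) (φ : K →g G) (a : α) : Set γ := φ '' (c ⁻¹' {a})

variable (K G) in
def realizableProfiles (c : V → α) : Set (α → Set γ) :=
  {f | ∃ φ : K →g G, colourProfile c φ ≤ f}

theorem colourProfile_nonempty {c : V → α} (hc : Function.Surjective c) (φ : K →g G)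
    (a : α) :
    (colourProfile c φ a).Nonempty :=
  let ⟨x, hx⟩ := hc a
  ⟨φ x, x, hx, rfl⟩

theorem nonempty_of_mem_realizableProfiles {c : V → α} (hc : Function.Surjective c)
    {f : α → Set γ} (hf : f ∈ realizableProfiles K G c) (a : α) : (f a).Nonempty :=
  let ⟨φ, hφ⟩ := hf
  (colourProfile_nonempty hc φ a).mono (hφ a)

end Profiles

section GlueStep

variable {H : SimpleGraph β} {σ : β → α} {a b : α} {G : SimpleGraph γ}

theorem colourProfile_comp_inl_le (φ : glueStep H σ a b →g G) :
    colourProfile σ (φ.comp (glueStep.inl H σ a b)) ≤ colourProfile (Sum.elim σ σ) φ := by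
  rintro c _ ⟨x, hx, rfl⟩
  exact ⟨.inl x, hx, rfl⟩

theorem colourProfile_comp_inr_le (φ : glueStep H σ a b →g G) :
    colourProfile σ (φ.comp (glueStep.inr H σ a b)) ≤ colourProfile (Sum.elim σ σ) φ := by
  rintro c _ ⟨x, hx, rfl⟩
  exact ⟨.inr x, hx, rfl⟩

theorem realizableProfiles_glueStep_subset :
    realizableProfiles (glueStep H σ a b) G (Sum.elim σ σ) ⊆ realizableProfiles H G σ :=
  fun _ ⟨φ, hφ⟩ => ⟨_, (colourProfile_comp_inl_le φ).trans hφ⟩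

theorem adj_of_minimal_realizableProfiles_glueStep {f : α → Set γ}
    (hf : f ∈ realizableProfiles (glueStep H σ a b) G (Sum.elim σ σ))
    (hmin : Minimal (· ∈ realizableProfiles H G σ) f) {c d : α} (hcd : s(c, d) = s(a, b))
    {u v : γ} (hu : u ∈ f c) (hv : v ∈ f d) : G.Adj u v := by
  obtain ⟨φ, hφ⟩ := hf
  have hinl : colourProfile σ (φ.comp (glueStep.inl H σ a b)) = f :=
    hmin.eq_of_le ⟨_, le_rfl⟩ ((colourProfile_comp_inl_le φ).trans hφ)
  have hinr : colourProfile σ (φ.comp (glueStep.inr H σ a b)) = f :=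
    hmin.eq_of_le ⟨_, le_rfl⟩ ((colourProfile_comp_inr_le φ).trans hφ)
  rw [← hinl] at hu
  rw [← hinr] at hv
  obtain ⟨x, rfl : σ x = c, rfl⟩ := hu
  obtain ⟨y, rfl : σ y = d, rfl⟩ := hv
  exact φ.map_rel (glueStep.adj_inl_inr.mpr hcd)

end GlueStep

section IterGlue

variable {H : SimpleGraph β} {σ : β → α} {ens : ℕ → α × α} {G : SimpleGraph γ}

theorem iterGlue_colouring_surjective (hσ : Function.Surjective σ) :
    ∀ m, Function.Surjective (iterGlue H σ ens m).2.2
  | 0 => hσ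
  | m + 1 => fun a =>
    let ⟨x, hx⟩ := iterGlue_colouring_surjective hσ m a
    ⟨.inl x, hx⟩

theorem antitone_nonempty_hom_iterGlue :
    Antitone fun m => Nonempty ((iterGlue H σ ens m).2.1 →g G) :=
  antitone_nat_of_succ_le fun _ ⟨φ⟩ => ⟨φ.comp (glueStep.inl _ _ _ _)⟩

theorem antitone_realizableProfiles_iterGlue :
    Antitone fun m => realizableProfiles (iterGlue H σ ens m).2.1 G (iterGlue H σ ens m).2.2 :=
  antitone_nat_of_succ_le fun _ => realizableProfiles_glueStep_subset

theorem nonempty_hom_of_forall_nonempty_hom_iterGlue [Finite α] [Finite γ] {F : SimpleGraph α}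
    (hσ : Function.Surjective σ)
    (hens : ∀ a b, F.Adj a b → ∀ M, ∃ j ≥ M, s((ens j).1, (ens j).2) = s(a, b))
    (hne : ∀ m, Nonempty ((iterGlue H σ ens m).2.1 →g G)) : Nonempty (F →g G) := by
  obtain ⟨M, hM⟩ := WellFoundedLT.antitone_chain_condition
    (antitone_realizableProfiles_iterGlue (H := H) (σ := σ) (ens := ens) (G := G))
  obtain ⟨φ⟩ := hne M
  obtain ⟨f, hf⟩ := Set.Finite.exists_minimal
    (Set.toFinite (realizableProfiles (iterGlue H σ ens M).2.1 G (iterGlue H σ ens M).2.2))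
    ⟨_, φ, le_rfl⟩
  have hfne := nonempty_of_mem_realizableProfiles (iterGlue_colouring_surjective hσ M) hf.prop
  refine ⟨⟨fun a => (hfne a).some, fun {a b} hab => ?_⟩⟩
  obtain ⟨j, hjM, hj⟩ := hens a b hab M
  have hf_succ := hM (j + 1) (by omega) ▸ hf.prop
  have hf_min := hM j hjM ▸ hf
  exact adj_of_minimal_realizableProfiles_glueStep hf_succ hf_min hj.symm
    (hfne a).some_mem (hfne b).some_mem

end IterGlue

theorem stmt_13_general {α β γ : Type} [Fintype α] [Fintype γ]
    (F : SimpleGraph α) (G : SimpleGraph γ) (H : SimpleGraph β) (σ : β → α)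
    (hσsurj : Function.Surjective σ)
    (hnohom : IsEmpty (F →g G))
    (k : ℕ)
    (ens : ℕ → α × α)
    (hens₂ : ∀ j, ens (j + k) = ens j)
    (hens₃ : ∀ x y, F.Adj x y → ∃ j, j < k ∧ s((ens j).1, (ens j).2) = s(x, y)) :
    ∃ m₀ : ℕ, ∀ m, m₀ ≤ m →
      IsEmpty ((iterGlue H σ ens m).2.1 →g G) := by
  have hrecur : ∀ x y, F.Adj x y → ∀ M, ∃ j ≥ M, s((ens j).1, (ens j).2) = s(x, y) := by
    intro x y hxy M
    obtain ⟨j, hjk, hj⟩ := hens₃ x y hxy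
    obtain ⟨i, hiM, hi⟩ := Function.Periodic.exists_ge_apply_eq hens₂ (by omega) j M
    exact ⟨i, hiM, hi ▸ hj⟩
  obtain ⟨M, hM⟩ : ∃ M, ¬Nonempty ((iterGlue H σ ens M).2.1 →g G) := by
    by_contra! h
    exact not_isEmpty_iff.mpr (nonempty_hom_of_forall_nonempty_hom_iterGlue hσsurj hrecur h) hnohom
  exact ⟨M, fun m hm => not_nonempty_iff.mp fun h => hM (antitone_nonempty_hom_iterGlue hm h)⟩

/-- Let `F` be a graph with at least one edge and `G` a graph with no
homomorphism from `F` to `G`.  Let `(H, σ)` be an `F`-coloured graph with `σ`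
surjective, and let `ens` be a cyclic enumeration of the edges of `F` (with period
`k = |E(F)|`, every step giving an edge of `F`, and every edge of `F` occurring among
the first `k` steps).  Then there is `m₀` (depending only on `F` and `G`) such that
for all `m ≥ m₀` the graph `H^m` of the iterated gluing construction admits no
homomorphism to `G`. -/
theorem stmt_13 {α β γ : Type} [Fintype α] [Fintype β] [Fintype γ]
    (F : SimpleGraph α) (G : SimpleGraph γ) (H : SimpleGraph β) (σ : β → α)
    (hF : F.edgeSet.Nonempty)
    (hσhom : ∀ x y, H.Adj x y → F.Adj (σ x) (σ y))
    (hσsurj : Function.Surjective σ)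
    (hnohom : IsEmpty (F →g G))
    (k : ℕ) (hk : k = F.edgeSet.ncard)
    (ens : ℕ → α × α)
    (hens₁ : ∀ j, F.Adj (ens j).1 (ens j).2)
    (hens₂ : ∀ j, ens (j + k) = ens j)
    (hens₃ : ∀ x y, F.Adj x y → ∃ j, j < k ∧ s((ens j).1, (ens j).2) = s(x, y)) :
    ∃ m₀ : ℕ, ∀ m, m₀ ≤ m →
      IsEmpty ((iterGlue H σ ens m).2.1 →g G) :=
  stmt_13_general F G H σ hσsurj hnohom k ens hens₂ hens₃
end

section
/- There is an absolute constant c > 0 such that the following holds. Let n be a positive integer, let p ≥ 100/n, and let G be an n-vertex tripartite graph with tripartition V(G) = A ∪ B ∪ C (A, B, C independent sets and every edge joins two different parts) that contains at least p·n² pairwise edge-disjoint triangles. Then G contains at least c·p³·n⁴ paths on four distinct vertices x_1 x_2 x_3 x_4 (with x_1x_2, x_2x_3, x_3x_4 edges of G) such that x_1, x_4 ∈ A, x_2 ∈ B, and x_3 ∈ C. -/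
set_option maxHeartbeats 1000000 in

/-- There is an absolute constant `c > 0` such that for every `n ≥ 1`,
every real `p ≥ 100/n`, and every `n`-vertex tripartite graph `G` with tripartition
`A ∪ B ∪ C` that contains at least `p·n²` pairwise edge-disjoint triangles, the graph
`G` contains at least `c·p³·n⁴` paths `x₁x₂x₃x₄` on four distinct vertices with
`x₁, x₄ ∈ A`, `x₂ ∈ B`, `x₃ ∈ C`. -/
theorem stmt_14 :
    ∃ c : ℝ, 0 < c ∧
      ∀ (n : ℕ) (p : ℝ) (G : SimpleGraph (Fin n)) (A B C : Set (Fin n)),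
        0 < n → 100 / (n : ℝ) ≤ p →
        A ∪ B ∪ C = Set.univ →
        Disjoint A B → Disjoint A C → Disjoint B C →
        (∀ x y, G.Adj x y →
          ¬(x ∈ A ∧ y ∈ A) ∧ ¬(x ∈ B ∧ y ∈ B) ∧ ¬(x ∈ C ∧ y ∈ C)) →
        (∃ 𝒯 : Finset (Finset (Fin n)),
          (∀ t ∈ 𝒯, t.card = 3 ∧ ∀ x ∈ t, ∀ y ∈ t, x ≠ y → G.Adj x y) ∧
          (∀ t ∈ 𝒯, ∀ t' ∈ 𝒯, t ≠ t' → (t ∩ t').card ≤ 1) ∧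
          p * (n : ℝ) ^ 2 ≤ (𝒯.card : ℝ)) →
        c * p ^ 3 * (n : ℝ) ^ 4 ≤
          (({q : Fin n × Fin n × Fin n × Fin n |
              q.1 ∈ A ∧ q.2.1 ∈ B ∧ q.2.2.1 ∈ C ∧ q.2.2.2 ∈ A ∧
              G.Adj q.1 q.2.1 ∧ G.Adj q.2.1 q.2.2.1 ∧ G.Adj q.2.2.1 q.2.2.2 ∧
              q.1 ≠ q.2.1 ∧ q.1 ≠ q.2.2.1 ∧ q.1 ≠ q.2.2.2 ∧
              q.2.1 ≠ q.2.2.1 ∧ q.2.1 ≠ q.2.2.2 ∧ q.2.2.1 ≠ q.2.2.2}).ncard : ℝ) := by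
  classical
  refine ⟨1/50, by norm_num, ?_⟩
  intro n p G A B C hn hp hunion hAB hAC hBC hpart h𝒯
  obtain ⟨𝒯, htri, hdisj, hcard⟩ := h𝒯
  have hn0 : (0:ℝ) < (n:ℝ) := by exact_mod_cast hn
  have hp0 : (0:ℝ) < p := lt_of_lt_of_le (by positivity) hp
  -- every vertex is in some part
  have hmem : ∀ v : Fin n, v ∈ A ∨ v ∈ B ∨ v ∈ C := by
    intro v
    have : v ∈ A ∪ B ∪ C := by rw [hunion]; exact Set.mem_univ v
    simpa [Set.mem_union, or_assoc] using this
  have hABne : ∀ {u v : Fin n}, u ∈ A → v ∈ B → u ≠ v := by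
    intro u v hu hv h; exact Set.disjoint_left.mp hAB (h ▸ hu) hv
  have hACne : ∀ {u v : Fin n}, u ∈ A → v ∈ C → u ≠ v := by
    intro u v hu hv h; exact Set.disjoint_left.mp hAC (h ▸ hu) hv
  have hBCne : ∀ {u v : Fin n}, u ∈ B → v ∈ C → u ≠ v := by
    intro u v hu hv h; exact Set.disjoint_left.mp hBC (h ▸ hu) hv
  -- each triangle has one vertex in each part
  have hstruct : ∀ T : Finset (Fin n), ∃ a b c : Fin n,
      T ∈ 𝒯 → a ∈ A ∧ b ∈ B ∧ c ∈ C ∧ G.Adj a b ∧ G.Adj b c ∧ G.Adj a c ∧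
        T = {a, b, c} := by
    intro T
    by_cases hT : T ∈ 𝒯
    swap
    · exact ⟨⟨0, hn⟩, ⟨0, hn⟩, ⟨0, hn⟩, fun h => absurd h hT⟩
    obtain ⟨hc3, hadj⟩ := htri T hT
    obtain ⟨x, y, z, hxy, hxz, hyz, hTeq⟩ := Finset.card_eq_three.mp hc3
    have hx : x ∈ T := by rw [hTeq]; simp
    have hy : y ∈ T := by rw [hTeq]; simp
    have hz : z ∈ T := by rw [hTeq]; simp
    have axy : G.Adj x y := hadj x hx y hy hxy
    have ayz : G.Adj y z := hadj y hy z hz hyz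
    have axz : G.Adj x z := hadj x hx z hz hxz
    have ayx := axy.symm
    have azy := ayz.symm
    have azx := axz.symm
    rcases hmem x with hxp | hxp | hxp <;>
      rcases hmem y with hyp | hyp | hyp <;>
        rcases hmem z with hzp | hzp | hzp <;>
    first
      | exact ((hpart x y axy).1 ⟨‹_›, ‹_›⟩).elim
      | exact ((hpart x y axy).2.1 ⟨‹_›, ‹_›⟩).elim
      | exact ((hpart x y axy).2.2 ⟨‹_›, ‹_›⟩).elim
      | exact ((hpart y z ayz).1 ⟨‹_›, ‹_›⟩).elim
      | exact ((hpart y z ayz).2.1 ⟨‹_›, ‹_›⟩).elim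
      | exact ((hpart y z ayz).2.2 ⟨‹_›, ‹_›⟩).elim
      | exact ((hpart x z axz).1 ⟨‹_›, ‹_›⟩).elim
      | exact ((hpart x z axz).2.1 ⟨‹_›, ‹_›⟩).elim
      | exact ((hpart x z axz).2.2 ⟨‹_›, ‹_›⟩).elim
      | exact ⟨x, y, z, fun _ => ⟨‹_›, ‹_›, ‹_›, by assumption, by assumption, by assumption,
          by rw [hTeq]⟩⟩
      | exact ⟨x, z, y, fun _ => ⟨‹_›, ‹_›, ‹_›, by assumption, by assumption, by assumption,
          by rw [hTeq]; ext w; simp; tauto⟩⟩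
      | exact ⟨y, x, z, fun _ => ⟨‹_›, ‹_›, ‹_›, by assumption, by assumption, by assumption,
          by rw [hTeq]; ext w; simp; tauto⟩⟩
      | exact ⟨y, z, x, fun _ => ⟨‹_›, ‹_›, ‹_›, by assumption, by assumption, by assumption,
          by rw [hTeq]; ext w; simp; tauto⟩⟩
      | exact ⟨z, x, y, fun _ => ⟨‹_›, ‹_›, ‹_›, by assumption, by assumption, by assumption,
          by rw [hTeq]; ext w; simp; tauto⟩⟩
      | exact ⟨z, y, x, fun _ => ⟨‹_›, ‹_›, ‹_›, by assumption, by assumption, by assumption,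
          by rw [hTeq]; ext w; simp; tauto⟩⟩
  choose fa fb fc hf using hstruct
  have haA : ∀ T ∈ 𝒯, fa T ∈ A := fun T hT => (hf T hT).1
  have hbB : ∀ T ∈ 𝒯, fb T ∈ B := fun T hT => (hf T hT).2.1
  have hcC : ∀ T ∈ 𝒯, fc T ∈ C := fun T hT => (hf T hT).2.2.1
  have hadjab : ∀ T ∈ 𝒯, G.Adj (fa T) (fb T) := fun T hT => (hf T hT).2.2.2.1
  have hadjbc : ∀ T ∈ 𝒯, G.Adj (fb T) (fc T) := fun T hT => (hf T hT).2.2.2.2.1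
  have hadjac : ∀ T ∈ 𝒯, G.Adj (fa T) (fc T) := fun T hT => (hf T hT).2.2.2.2.2.1
  have haT : ∀ T ∈ 𝒯, fa T ∈ T := fun T hT => by
    nth_rewrite 1 [(hf T hT).2.2.2.2.2.2]
    simp
  have hbT : ∀ T ∈ 𝒯, fb T ∈ T := fun T hT => by
    nth_rewrite 1 [(hf T hT).2.2.2.2.2.2]
    simp
  have hcT : ∀ T ∈ 𝒯, fc T ∈ T := fun T hT => by
    nth_rewrite 1 [(hf T hT).2.2.2.2.2.2]
    simp
  -- two distinct common vertices force equal triangles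
  have hkey : ∀ T ∈ 𝒯, ∀ T' ∈ 𝒯, ∀ u v : Fin n, u ∈ T → u ∈ T' → v ∈ T → v ∈ T' →
      u ≠ v → T = T' := by
    intro T hT T' hT' u v hu hu' hv hv' huv
    by_contra hne
    have h1 := hdisj T hT T' hT' hne
    have h2 : ({u, v} : Finset (Fin n)) ⊆ T ∩ T' := by
      intro w hw
      rcases Finset.mem_insert.mp hw with h | h
      · subst h; exact Finset.mem_inter.mpr ⟨hu, hu'⟩
      · rw [Finset.mem_singleton] at h; subst h; exact Finset.mem_inter.mpr ⟨hv, hv'⟩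
    have h3 : 2 ≤ (T ∩ T').card := by
      calc 2 = ({u, v} : Finset (Fin n)).card := (Finset.card_pair huv).symm
        _ ≤ _ := Finset.card_le_card h2
    omega
  have hdetB : ∀ T ∈ 𝒯, ∀ T' ∈ 𝒯, fb T = fb T' → fa T = fa T' → T = T' := by
    intro T hT T' hT' hb ha
    refine hkey T hT T' hT' (fa T) (fb T) (haT T hT) ?_ (hbT T hT) ?_
      (hABne (haA T hT) (hbB T hT))
    · rw [ha]; exact haT T' hT'
    · rw [hb]; exact hbT T' hT'
  have hdetC : ∀ T ∈ 𝒯, ∀ T' ∈ 𝒯, fc T = fc T' → fa T = fa T' → T = T' := by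
    intro T hT T' hT' hc ha
    refine hkey T hT T' hT' (fa T) (fc T) (haT T hT) ?_ (hcT T hT) ?_
      (hACne (haA T hT) (hcC T hT))
    · rw [ha]; exact haT T' hT'
    · rw [hc]; exact hcT T' hT'
  have hdetBC : ∀ T ∈ 𝒯, ∀ T' ∈ 𝒯, fb T = fb T' → fc T = fc T' → T = T' := by
    intro T hT T' hT' hb hc
    refine hkey T hT T' hT' (fb T) (fc T) (hbT T hT) ?_ (hcT T hT) ?_
      (hBCne (hbB T hT) (hcC T hT))
    · rw [hb]; exact hbT T' hT'
    · rw [hc]; exact hcT T' hT'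
  -- counting
  set t := 𝒯.card with ht_def
  set m := t / (4 * n) with hm_def
  -- 100 n ≤ t
  have h100 : 100 * n ≤ t := by
    have h1 : (100:ℝ) * n ≤ p * (n:ℝ)^2 := by
      have : (100:ℝ) * n = (100 / n) * (n:ℝ)^2 := by field_simp
      rw [this]
      exact mul_le_mul_of_nonneg_right hp (by positivity)
    have h2 : (100:ℝ) * n ≤ (t:ℝ) := h1.trans hcard
    exact_mod_cast h2
  have hm25 : 25 ≤ m := by
    rw [hm_def, Nat.le_div_iff_mul_le (by omega)]
    omega
  -- bad triangles bound
  have hbad : ∀ (g : Finset (Fin n) → Fin n),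
      (𝒯.filter fun T => (𝒯.filter fun T' => g T' = g T).card ≤ m).card ≤ n * m := by
    intro g
    rw [Finset.card_eq_sum_card_fiberwise (f := g) (t := (Finset.univ : Finset (Fin n)))
      (fun x _ => Finset.mem_univ _)]
    have hb : ∀ b ∈ (Finset.univ : Finset (Fin n)),
        (((𝒯.filter fun T => (𝒯.filter fun T' => g T' = g T).card ≤ m)).filter
          fun T => g T = b).card ≤ m := by
      intro b _
      by_cases h : (𝒯.filter fun T' => g T' = b).card ≤ m
      · refine le_trans (Finset.card_le_card ?_) h
        intro T hT
        simp only [Finset.mem_filter] at hT ⊢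
        exact ⟨hT.1.1, hT.2⟩
      · have hempty : ((𝒯.filter fun T => (𝒯.filter fun T' => g T' = g T).card ≤ m).filter
            fun T => g T = b) = ∅ := by
          refine Finset.eq_empty_of_forall_notMem ?_
          intro T hT
          simp only [Finset.mem_filter] at hT
          apply h
          rw [← hT.2]
          exact hT.1.2
        rw [hempty]
        simp
    calc ∑ b ∈ Finset.univ, (((𝒯.filter fun T =>
          (𝒯.filter fun T' => g T' = g T).card ≤ m)).filter fun T => g T = b).card
        ≤ ∑ _b ∈ (Finset.univ : Finset (Fin n)), m := Finset.sum_le_sum hb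
      _ = n * m := by simp [mul_comm]
  -- the good triangles
  set good := 𝒯.filter (fun T => m < (𝒯.filter fun T' => fb T' = fb T).card ∧
      m < (𝒯.filter fun T' => fc T' = fc T).card) with hgood_def
  have hcover : t ≤ good.card + (n * m + n * m) := by
    have hsub : 𝒯 ⊆ good ∪ ((𝒯.filter fun T => (𝒯.filter fun T' => fb T' = fb T).card ≤ m) ∪
        (𝒯.filter fun T => (𝒯.filter fun T' => fc T' = fc T).card ≤ m)) := by
      intro T hT
      rcases le_or_gt ((𝒯.filter fun T' => fb T' = fb T).card) m with h1 | h1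
      · exact Finset.mem_union_right _ (Finset.mem_union_left _ (Finset.mem_filter.mpr ⟨hT, h1⟩))
      rcases le_or_gt ((𝒯.filter fun T' => fc T' = fc T).card) m with h2 | h2
      · exact Finset.mem_union_right _ (Finset.mem_union_right _ (Finset.mem_filter.mpr ⟨hT, h2⟩))
      · exact Finset.mem_union_left _ (Finset.mem_filter.mpr ⟨hT, h1, h2⟩)
    calc t ≤ (good ∪ _).card := Finset.card_le_card hsub
      _ ≤ good.card + ((𝒯.filter fun T => (𝒯.filter fun T' => fb T' = fb T).card ≤ m) ∪
            (𝒯.filter fun T => (𝒯.filter fun T' => fc T' = fc T).card ≤ m)).card :=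
          Finset.card_union_le _ _
      _ ≤ good.card + ((𝒯.filter fun T => (𝒯.filter fun T' => fb T' = fb T).card ≤ m).card +
            (𝒯.filter fun T => (𝒯.filter fun T' => fc T' = fc T).card ≤ m).card) := by
          exact Nat.add_le_add_left (Finset.card_union_le _ _) _
      _ ≤ good.card + (n * m + n * m) := by
          exact Nat.add_le_add_left (Nat.add_le_add (hbad fb) (hbad fc)) _
  -- the triple set
  set SS := ((𝒯 ×ˢ (𝒯 ×ˢ 𝒯)).filter fun q => fb q.2.1 = fb q.1 ∧ fc q.2.2 = fc q.1 ∧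
      fa q.2.1 ≠ fa q.2.2) with hSS_def
  have hfst : ∀ q ∈ SS, q.1 ∈ 𝒯 := by
    intro q hq
    have := (Finset.mem_filter.mp hq).1
    exact (Finset.mem_product.mp this).1
  have hfiber : ∀ T ∈ good, m * m ≤ (SS.filter fun q => q.1 = T).card := by
    intro T hTg
    obtain ⟨hT, hbm, hcm⟩ : T ∈ 𝒯 ∧ m < (𝒯.filter fun T' => fb T' = fb T).card ∧
        m < (𝒯.filter fun T' => fc T' = fc T).card := by
      simpa [hgood_def, Finset.mem_filter] using hTg
    have heq : SS.filter (fun q => q.1 = T) =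
        {T} ×ˢ (((𝒯.filter fun T' => fb T' = fb T) ×ˢ (𝒯.filter fun T' => fc T' = fc T)).filter
          fun r => fa r.1 ≠ fa r.2) := by
      ext q
      simp only [hSS_def, Finset.mem_filter, Finset.mem_product, Finset.mem_singleton]
      constructor
      · rintro ⟨⟨⟨h1, h2, h3⟩, h4, h5, h6⟩, h7⟩
        subst h7
        exact ⟨rfl, ⟨⟨h2, h4⟩, ⟨h3, h5⟩⟩, h6⟩
      · rintro ⟨h7, ⟨⟨h2, h4⟩, ⟨h3, h5⟩⟩, h6⟩
        subst h7
        exact ⟨⟨⟨hT, h2, h3⟩, h4, h5, h6⟩, rfl⟩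
    rw [heq, Finset.card_product, Finset.card_singleton, one_mul]
    -- count the pairs
    set Q := (((𝒯.filter fun T' => fb T' = fb T) ×ˢ (𝒯.filter fun T' => fc T' = fc T)).filter
      fun r => fa r.1 ≠ fa r.2) with hQ_def
    have hsnd : ∀ r ∈ Q, r.2 ∈ (𝒯.filter fun T' => fc T' = fc T) := by
      intro r hr
      exact (Finset.mem_product.mp (Finset.mem_filter.mp hr).1).2
    rw [Finset.card_eq_sum_card_fiberwise (f := Prod.snd) hsnd]
    have hinner : ∀ T2 ∈ (𝒯.filter fun T' => fc T' = fc T), m ≤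
        (Q.filter fun r => r.2 = T2).card := by
      intro T2 hT2
      have heq2 : Q.filter (fun r => r.2 = T2) =
          ((𝒯.filter fun T' => fb T' = fb T).filter fun T1 => fa T1 ≠ fa T2) ×ˢ {T2} := by
        ext r
        simp only [hQ_def, Finset.mem_filter, Finset.mem_product, Finset.mem_singleton]
        constructor
        · rintro ⟨⟨⟨h1, h2⟩, h3⟩, h4⟩
          subst h4
          exact ⟨⟨h1, h3⟩, rfl⟩
        · rintro ⟨⟨h1, h3⟩, h4⟩
          subst h4
          exact ⟨⟨⟨h1, Finset.mem_filter.mp hT2⟩, h3⟩, rfl⟩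
      rw [heq2, Finset.card_product, Finset.card_singleton, mul_one]
      have hone : ((𝒯.filter fun T' => fb T' = fb T).filter fun T1 => fa T1 = fa T2).card ≤ 1 := by
        refine Finset.card_le_one.mpr ?_
        intro a ha b hb
        simp only [Finset.mem_filter] at ha hb
        exact hdetB a ha.1.1 b hb.1.1 (by rw [ha.1.2, hb.1.2]) (by rw [ha.2, hb.2])
      have hsplit := Finset.card_filter_add_card_filter_not
        (s := (𝒯.filter fun T' => fb T' = fb T)) (p := fun T1 => fa T1 = fa T2)
      simp only [ne_eq]
      omega
    calc m * m ≤ (𝒯.filter fun T' => fc T' = fc T).card * m :=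
          Nat.mul_le_mul (le_of_lt hcm) le_rfl
      _ = ∑ _T2 ∈ (𝒯.filter fun T' => fc T' = fc T), m := by
          rw [Finset.sum_const, smul_eq_mul]
      _ ≤ ∑ T2 ∈ (𝒯.filter fun T' => fc T' = fc T), (Q.filter fun r => r.2 = T2).card :=
          Finset.sum_le_sum hinner
  have hScard : good.card * (m * m) ≤ SS.card := by
    rw [Finset.card_eq_sum_card_fiberwise (f := Prod.fst) hfst]
    calc good.card * (m * m) = ∑ _T ∈ good, m * m := by rw [Finset.sum_const, smul_eq_mul]
      _ ≤ ∑ T ∈ good, (SS.filter fun q => q.1 = T).card := Finset.sum_le_sum hfiber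
      _ ≤ ∑ T ∈ 𝒯, (SS.filter fun q => q.1 = T).card := by
          rw [hgood_def]
          exact Finset.sum_le_sum_of_subset (Finset.filter_subset _ _)
  -- the path set
  set P := {q : Fin n × Fin n × Fin n × Fin n |
      q.1 ∈ A ∧ q.2.1 ∈ B ∧ q.2.2.1 ∈ C ∧ q.2.2.2 ∈ A ∧
      G.Adj q.1 q.2.1 ∧ G.Adj q.2.1 q.2.2.1 ∧ G.Adj q.2.2.1 q.2.2.2 ∧
      q.1 ≠ q.2.1 ∧ q.1 ≠ q.2.2.1 ∧ q.1 ≠ q.2.2.2 ∧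
      q.2.1 ≠ q.2.2.1 ∧ q.2.1 ≠ q.2.2.2 ∧ q.2.2.1 ≠ q.2.2.2} with hP_def
  set ff : Finset (Fin n) × Finset (Fin n) × Finset (Fin n) → Fin n × Fin n × Fin n × Fin n :=
    fun q => (fa q.2.1, fb q.1, fc q.1, fa q.2.2) with hff_def
  have hmemSS : ∀ q ∈ SS, q.1 ∈ 𝒯 ∧ q.2.1 ∈ 𝒯 ∧ q.2.2 ∈ 𝒯 ∧ fb q.2.1 = fb q.1 ∧
      fc q.2.2 = fc q.1 ∧ fa q.2.1 ≠ fa q.2.2 := by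
    intro q hq
    rw [hSS_def] at hq
    simp only [Finset.mem_filter, Finset.mem_product] at hq
    exact ⟨hq.1.1, hq.1.2.1, hq.1.2.2, hq.2.1, hq.2.2.1, hq.2.2.2⟩
  have hinj : Set.InjOn ff ↑SS := by
    intro q hq q' hq' heq
    obtain ⟨h1, h2, h3, h4, h5, h6⟩ := hmemSS q (Finset.mem_coe.mp hq)
    obtain ⟨h1', h2', h3', h4', h5', h6'⟩ := hmemSS q' (Finset.mem_coe.mp hq')
    simp only [hff_def, Prod.mk.injEq] at heq
    obtain ⟨e1, e2, e3, e4⟩ := heq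
    have hq1 : q.1 = q'.1 := hdetBC _ h1 _ h1' e2 e3
    have hq21 : q.2.1 = q'.2.1 :=
      hdetB _ h2 _ h2' (h4.trans (e2.trans h4'.symm)) e1
    have hq22 : q.2.2 = q'.2.2 :=
      hdetC _ h3 _ h3' (h5.trans (e3.trans h5'.symm)) e4
    rw [Prod.ext_iff]
    refine ⟨hq1, ?_⟩
    rw [Prod.ext_iff]
    exact ⟨hq21, hq22⟩
  have hsubP : ↑(SS.image ff) ⊆ P := by
    intro x hx
    simp only [Finset.coe_image, Set.mem_image, Finset.mem_coe] at hx
    obtain ⟨q, hq, rfl⟩ := hx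
    obtain ⟨h1, h2, h3, h4, h5, h6⟩ := hmemSS q hq
    rw [hP_def]
    simp only [Set.mem_setOf_eq, hff_def]
    refine ⟨haA _ h2, hbB _ h1, hcC _ h1, haA _ h3, ?_, hadjbc _ h1, ?_,
      hABne (haA _ h2) (hbB _ h1), hACne (haA _ h2) (hcC _ h1), h6,
      hBCne (hbB _ h1) (hcC _ h1), (hABne (haA _ h3) (hbB _ h1)).symm,
      (hACne (haA _ h3) (hcC _ h1)).symm⟩
    · rw [← h4]; exact hadjab _ h2
    · rw [← h5]; exact (hadjac _ h3).symm
  have hcount : good.card * (m * m) ≤ P.ncard := by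
    calc good.card * (m * m) ≤ SS.card := hScard
      _ = (SS.image ff).card := (Finset.card_image_of_injOn hinj).symm
      _ = (↑(SS.image ff) : Set (Fin n × Fin n × Fin n × Fin n)).ncard :=
          (Set.ncard_coe_finset _).symm
      _ ≤ P.ncard := Set.ncard_le_ncard hsubP (Set.toFinite P)
  -- real arithmetic
  have hNm : (m:ℝ) * (4*(n:ℝ)) ≤ (t:ℝ) := by exact_mod_cast Nat.div_mul_le_self t (4*n)
  have htm : (t:ℝ) < (m:ℝ) * (4*(n:ℝ)) + 4*(n:ℝ) := by
    have h2 := Nat.mod_lt t (show 0 < 4*n by omega)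
    have h3 : t < m * (4*n) + 4*n := by
      calc t = (4*n) * m + t % (4*n) := by rw [hm_def]; exact (Nat.div_add_mod t (4*n)).symm
        _ < (4*n) * m + 4*n := Nat.add_lt_add_left h2 _
        _ = m * (4*n) + 4*n := by rw [Nat.mul_comm]
    exact_mod_cast h3
  have hm25' : (25:ℝ) ≤ (m:ℝ) := by exact_mod_cast hm25
  have hTlow : 100*(n:ℝ) ≤ (t:ℝ) := by exact_mod_cast h100
  have hgood' : (t:ℝ) ≤ (good.card:ℝ) + ((n:ℝ)*(m:ℝ) + (n:ℝ)*(m:ℝ)) := by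
    exact_mod_cast hcover
  have hM : (t:ℝ)/(5*(n:ℝ)) ≤ (m:ℝ) := by
    rw [div_le_iff₀ (by positivity)]
    nlinarith [mul_le_mul_of_nonneg_right hm25' (le_of_lt hn0)]
  have hgd : (t:ℝ)/2 ≤ (good.card:ℝ) := by nlinarith
  have hPn : (good.card:ℝ) * ((m:ℝ)*(m:ℝ)) ≤ (P.ncard:ℝ) := by exact_mod_cast hcount
  have hc3 : p^3 * (n:ℝ)^6 ≤ (t:ℝ)^3 := by
    have h1 := pow_le_pow_left₀ (show (0:ℝ) ≤ p * (n:ℝ)^2 by positivity) hcard 3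
    calc p^3 * (n:ℝ)^6 = (p * (n:ℝ)^2)^3 := by ring
      _ ≤ (t:ℝ)^3 := h1
  calc 1/50 * p^3 * (n:ℝ)^4 = (p^3*(n:ℝ)^6) / (50*(n:ℝ)^2) := by
        field_simp
    _ ≤ (t:ℝ)^3/(50*(n:ℝ)^2) := by gcongr
    _ = (t:ℝ)/2 * ((t:ℝ)/(5*(n:ℝ)))^2 := by
        field_simp
        ring
    _ ≤ (good.card:ℝ) * ((m:ℝ)*(m:ℝ)) := by
        have h0 : (0:ℝ) ≤ (t:ℝ)/(5*(n:ℝ)) :=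
          div_nonneg (Nat.cast_nonneg _) (by linarith)
        have h1 : ((t:ℝ)/(5*(n:ℝ)))^2 ≤ (m:ℝ)*(m:ℝ) := by
          rw [sq]
          exact mul_le_mul hM hM h0 (le_trans h0 hM)
        refine mul_le_mul hgd h1 ?_ (Nat.cast_nonneg _)
        rw [sq]
        exact mul_nonneg h0 h0
    _ ≤ (P.ncard:ℝ) := hPn
end

section
/- Let F be a graph, let (H, σ) be an F-coloured graph, and let c : V(F) → ℤ be an injection. Suppose that a real linear combination of the coefficient vectors of the cycle-equations in Eq(H, σ, c) yields an equation Σ_{e ∈ E(H)} a_e x_e = 0 that is convex, i.e., exactly one of the coefficients a_e is negative and all other coefficients a_e are nonnegative. Then H contains a cycle v_1 v_2 ⋯ v_ℓ with c(σ(v_1)) < c(σ(v_2)) < ... < c(σ(v_ℓ)); in particular, the cycle-equation of this single cycle is convex. -/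
/-!
Orient every edge of `H` towards its larger colour. For a potential `p : V(H) → ℝ`, weighting each
edge `uv` by the difference quotient `(p v - p u) / (c(σ v) - c(σ u))` defines a linear functional
that vanishes on every cycle-equation, since along a closed walk the weighted coefficients
telescope. Let `e₀ = yx` be the negative edge, oriented from `y` to `x`, and let `p` be the
indicator of the set of vertices reachable from `y` by increasing walks avoiding `e₀`. This `p`
never decreases along an increasing edge other than `e₀`, so the functional is nonnegative on the
other coefficients of `a`. If `x` were not reachable, it would also be positive on `a e₀`, which is
impossible since `a` is a combination of cycle-equations. So an increasing path runs from `y` to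
`x`, and the edge `xy` closes it into a cycle with increasing colours.
-/

open SimpleGraph Finset

/-- The coefficient vector of the cycle-equation of a closed walk `w` in `H`, with
respect to the colouring `σ` and the injection `c`: the variable indexed by the edge
`{v_i, v_{i+1}}` (traversed from `v_i` to `v_{i+1}`) receives the coefficient
`c(σ(v_{i+1})) − c(σ(v_i))`. -/
def cycleEqCoeff {β α : Type*} [DecidableEq β] {H : SimpleGraph β} (σ : β → α) (c : α → ℤ)
    {u v : β} (w : H.Walk u v) : Sym2 β → ℤ :=
  fun e => (w.darts.map
    (fun d => if d.edge = e then c (σ d.toProd.2) - c (σ d.toProd.1) else 0)).sum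

namespace SimpleGraph.Walk

variable {β γ : Type*} {H : SimpleGraph β}

theorem sum_darts_map_sub [AddCommGroup γ] (f : β → γ) {u v : β} (w : H.Walk u v) :
    (w.darts.map fun d => f d.snd - f d.fst).sum = f v - f u := by
  induction w with
  | nil => simp
  | cons h q ih => simp [ih]

theorem isChain_support_map_of_darts {r : γ → γ → Prop} (f : β → γ) {u v : β} {w : H.Walk u v}
    (hw : ∀ d ∈ w.darts, r (f d.fst) (f d.snd)) : (w.support.map f).IsChain r := by
  induction w with
  | nil => simp
  | cons h q ih =>
    simp only [darts_cons, List.mem_cons, forall_eq_or_imp] at hw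
    rw [support_cons, List.map_cons]
    refine List.isChain_cons.mpr ⟨?_, ih hw.2⟩
    rw [← cons_tail_support q, List.map_cons, List.head?_cons]
    simpa using hw.1

theorem exists_isCycle_isChain_of_darts_lt [Preorder γ] (f : β → γ) {x y : β} (h : H.Adj x y)
    (q : H.Walk y x) (hq : ∀ d ∈ q.darts, f d.fst < f d.snd) (he : s(y, x) ∉ q.edges) :
    ∃ w : H.Walk y y, w.IsCycle ∧ (w.support.dropLast.map f).IsChain (· < ·) := by
  have hchain := isChain_support_map_of_darts f hq
  have hpath : q.IsPath := IsPath.mk' ((List.sortedLT_iff_isChain.mpr hchain).nodup.of_map f)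
  refine ⟨q.concat h, ?_, ?_⟩
  · rw [← isCycle_reverse, reverse_concat, cons_isCycle_iff, isPath_reverse_iff, edges_reverse,
      List.mem_reverse]
    exact ⟨hpath, he⟩
  · rwa [support_concat, List.dropLast_concat]

end SimpleGraph.Walk

section CycleEquations

variable {α β : Type*} [Fintype β] [DecidableEq β] {H : SimpleGraph β} (σ : β → α) (c : α → ℤ)

theorem sum_mul_cycleEqCoeff (μ : Sym2 β → ℝ) {u v : β} (w : H.Walk u v) :
    ∑ e, μ e * (cycleEqCoeff σ c w e : ℝ) =
      (w.darts.map fun d => μ d.edge * ((c (σ d.snd) : ℝ) - c (σ d.fst))).sum := by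
  induction w with
  | nil => simp [cycleEqCoeff]
  | cons h q ih =>
    simp only [cycleEqCoeff, Walk.darts_cons, List.map_cons, List.sum_cons] at ih ⊢
    simp only [Int.cast_add, mul_add, Finset.sum_add_distrib, ih, Int.cast_ite, Int.cast_sub,
      Int.cast_zero, mul_ite, mul_zero, Finset.sum_ite_eq, Finset.mem_univ, if_true]

theorem sum_mul_cycleEqCoeff_eq_sub {μ : Sym2 β → ℝ} (p : β → ℝ)
    (hμ : ∀ u v, H.Adj u v → μ s(u, v) * ((c (σ v) : ℝ) - c (σ u)) = p v - p u)
    {u v : β} (w : H.Walk u v) :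
    ∑ e, μ e * (cycleEqCoeff σ c w e : ℝ) = p v - p u := by
  rw [sum_mul_cycleEqCoeff, ← w.sum_darts_map_sub p]
  exact congrArg List.sum (List.map_congr_left fun d _ => hμ _ _ d.adj)

def cycleEqVectors (H : SimpleGraph β) : Set (Sym2 β → ℝ) :=
  {x | ∃ (v : β) (w : H.Walk v v), w.IsCycle ∧ x = fun e => (cycleEqCoeff σ c w e : ℝ)}

theorem sum_mul_eq_zero_of_mem_span {μ : Sym2 β → ℝ} (p : β → ℝ)
    (hμ : ∀ u v, H.Adj u v → μ s(u, v) * ((c (σ v) : ℝ) - c (σ u)) = p v - p u)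
    {a : Sym2 β → ℝ} (ha : a ∈ Submodule.span ℝ (cycleEqVectors σ c H)) :
    ∑ e, μ e * a e = 0 := by
  induction ha using Submodule.span_induction with
  | mem x hx =>
    obtain ⟨v, w, -, rfl⟩ := hx
    simpa using sum_mul_cycleEqCoeff_eq_sub σ c p hμ w
  | zero => simp
  | add x y _ _ hx hy => simp [mul_add, Finset.sum_add_distrib, hx, hy]
  | smul r x _ hx => simp [mul_left_comm, ← Finset.mul_sum, hx]

end CycleEquations

section EdgeSlope

variable {β : Type*} (H : SimpleGraph β) (κ p : β → ℝ)

-- Zero off the edges, where the sign of a convex combination is not controlled.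
open Classical in
noncomputable def edgeSlope (e : Sym2 β) : ℝ :=
  if e ∈ H.edgeSet then
    Sym2.lift ⟨fun u v => (p v - p u) / (κ v - κ u), fun u v => by
      dsimp only
      rw [← neg_sub (p u), ← neg_sub (κ u), neg_div_neg_eq]⟩ e
  else 0

variable {H κ p}

theorem edgeSlope_mk {u v : β} (h : H.Adj u v) :
    edgeSlope H κ p s(u, v) = (p v - p u) / (κ v - κ u) := by
  simp [edgeSlope, h]

theorem edgeSlope_of_notMem {e : Sym2 β} (he : e ∉ H.edgeSet) : edgeSlope H κ p e = 0 := by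
  simp [edgeSlope, he]

theorem edgeSlope_mul_sub {u v : β} (h : H.Adj u v) (hκ : κ u ≠ κ v) :
    edgeSlope H κ p s(u, v) * (κ v - κ u) = p v - p u := by
  rw [edgeSlope_mk h, div_mul_cancel₀ _ (sub_ne_zero.mpr hκ.symm)]

end EdgeSlope

section Convex

variable {α β : Type*} {H : SimpleGraph β} {σ : β → α} {c : α → ℤ}

theorem exists_adj_lt_of_mem_edgeSet (hcol : ∀ u v, H.Adj u v → c (σ u) ≠ c (σ v))
    {e : Sym2 β} (he : e ∈ H.edgeSet) :
    ∃ u v, H.Adj u v ∧ c (σ u) < c (σ v) ∧ e = s(u, v) := by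
  induction e using Sym2.ind with
  | _ u v =>
    rcases (hcol u v he).lt_or_gt with huv | hvu
    · exact ⟨u, v, he, huv, rfl⟩
    · exact ⟨v, u, H.adj_symm he, hvu, Sym2.eq_swap⟩

variable [Fintype β] [DecidableEq β]

theorem le_of_mem_span_cycleEqVectors (hcol : ∀ u v, H.Adj u v → c (σ u) ≠ c (σ v))
    {a : Sym2 β → ℝ} (ha : a ∈ Submodule.span ℝ (cycleEqVectors σ c H)) {x y : β}
    (hyx : H.Adj y x) (hlt : c (σ y) < c (σ x)) (hneg : a s(y, x) < 0)
    (hpos : ∀ e ∈ H.edgeSet, e ≠ s(y, x) → 0 ≤ a e) {p : β → ℝ}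
    (hp : ∀ u v, H.Adj u v → c (σ u) < c (σ v) → s(u, v) ≠ s(y, x) → p u ≤ p v) :
    p y ≤ p x := by
  by_contra! hpx
  have hμ₀ : edgeSlope H (fun v => (c (σ v) : ℝ)) p s(y, x) < 0 := by
    rw [edgeSlope_mk hyx]
    exact div_neg_of_neg_of_pos (sub_neg.mpr hpx) (sub_pos.mpr (by exact_mod_cast hlt))
  have hμ : ∀ e ∈ univ.erase s(y, x), 0 ≤ edgeSlope H (fun v => (c (σ v) : ℝ)) p e * a e := by
    intro e he
    have he : e ≠ s(y, x) := ne_of_mem_erase he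
    by_cases hE : e ∈ H.edgeSet
    · obtain ⟨u, v, huv, hκ, rfl⟩ := exists_adj_lt_of_mem_edgeSet hcol hE
      refine mul_nonneg ?_ (hpos _ hE he)
      rw [edgeSlope_mk huv]
      exact div_nonneg (sub_nonneg.mpr (hp u v huv hκ he))
        (sub_nonneg.mpr (by exact_mod_cast hκ.le))
    · simp [edgeSlope_of_notMem hE]
  have hsum := sum_mul_eq_zero_of_mem_span σ c p
    (fun u v h => edgeSlope_mul_sub h (by exact_mod_cast hcol u v h)) ha
  rw [← add_sum_erase _ _ (mem_univ s(y, x))] at hsum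
  linarith [mul_pos_of_neg_of_neg hμ₀ hneg, sum_nonneg hμ]

theorem exists_walk_darts_lt_of_mem_span_cycleEqVectors
    (hcol : ∀ u v, H.Adj u v → c (σ u) ≠ c (σ v))
    {a : Sym2 β → ℝ} (ha : a ∈ Submodule.span ℝ (cycleEqVectors σ c H)) {x y : β}
    (hyx : H.Adj y x) (hlt : c (σ y) < c (σ x)) (hneg : a s(y, x) < 0)
    (hpos : ∀ e ∈ H.edgeSet, e ≠ s(y, x) → 0 ≤ a e) :
    ∃ q : H.Walk y x, ∀ d ∈ q.darts, c (σ d.fst) < c (σ d.snd) ∧ d.edge ≠ s(y, x) := by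
  set S := {v | ∃ q : H.Walk y v, ∀ d ∈ q.darts, c (σ d.fst) < c (σ d.snd) ∧ d.edge ≠ s(y, x)}
  have hS : ∀ u v, H.Adj u v → c (σ u) < c (σ v) → s(u, v) ≠ s(y, x) → u ∈ S → v ∈ S := by
    rintro u v h huv hne ⟨q, hq⟩
    refine ⟨q.concat h, fun d hd => ?_⟩
    rw [Walk.darts_concat, List.concat_eq_append, List.mem_append, List.mem_singleton] at hd
    rcases hd with hd | rfl
    · exact hq d hd
    · exact ⟨huv, hne⟩
  have hy : y ∈ S := ⟨Walk.nil, by simp⟩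
  have hyx_le := le_of_mem_span_cycleEqVectors hcol ha hyx hlt hneg hpos (p := S.indicator 1)
    fun u v h huv hne => by
      by_cases hu : u ∈ S
      · simp [hu, hS u v h huv hne hu]
      · simp [hu, Set.indicator_nonneg]
  show x ∈ S
  by_contra hx
  rw [Set.indicator_of_mem hy, Set.indicator_of_notMem hx] at hyx_le
  norm_num at hyx_le

end Convex

theorem stmt_16_general {α β : Type*} [Fintype β] [DecidableEq β]
    (F : SimpleGraph α) (H : SimpleGraph β) (σ : β → α)
    (hσ : ∀ x y, H.Adj x y → F.Adj (σ x) (σ y))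
    (c : α → ℤ) (hc : Function.Injective c)
    (a : Sym2 β → ℝ)
    (ha : a ∈ Submodule.span ℝ
      {x : Sym2 β → ℝ | ∃ (v : β) (w : H.Walk v v), w.IsCycle ∧
        x = fun e => (cycleEqCoeff σ c w e : ℝ)})
    (e₀ : Sym2 β) (he₀ : e₀ ∈ H.edgeSet) (hneg : a e₀ < 0)
    (hpos : ∀ e ∈ H.edgeSet, e ≠ e₀ → 0 ≤ a e) :
    ∃ (v : β) (w : H.Walk v v), w.IsCycle ∧
      List.Chain' (· < ·) (w.support.dropLast.map (fun x => c (σ x))) := by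
  have hcol : ∀ u v, H.Adj u v → c (σ u) ≠ c (σ v) :=
    fun u v h hcuv => (hσ u v h).ne (hc hcuv)
  obtain ⟨y, x, hyx, hlt, rfl⟩ := exists_adj_lt_of_mem_edgeSet hcol he₀
  obtain ⟨q, hq⟩ := exists_walk_darts_lt_of_mem_span_cycleEqVectors hcol ha hyx hlt hneg hpos
  have hq₀ : s(y, x) ∉ q.edges := fun h => by
    obtain ⟨d, hd, hde⟩ := List.mem_map.mp h
    exact (hq d hd).2 hde
  exact ⟨y, Walk.exists_isCycle_isChain_of_darts_lt _ hyx.symm q (fun d hd => (hq d hd).1) hq₀⟩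

/-- Let `(H, σ)` be an `F`-coloured graph and `c : V(F) → ℤ` an
injection.  If some real linear combination of the coefficient vectors of the
cycle-equations of `H` (with respect to `σ` and `c`) is a convex equation — i.e. has
exactly one negative coefficient `a_{e₀}` on the edges of `H`, all other edge
coefficients being nonnegative — then `H` contains a cycle whose vertices have strictly
increasing colours `c(σ(v₁)) < c(σ(v₂)) < ⋯ < c(σ(v_ℓ))`; in particular the
cycle-equation of this single cycle is convex. -/
theorem stmt_16 {α β : Type*} [Fintype α] [Fintype β] [DecidableEq β]
    (F : SimpleGraph α) (H : SimpleGraph β) (σ : β → α)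
    (hσ : ∀ x y, H.Adj x y → F.Adj (σ x) (σ y))
    (c : α → ℤ) (hc : Function.Injective c)
    (a : Sym2 β → ℝ)
    (ha : a ∈ Submodule.span ℝ
      {x : Sym2 β → ℝ | ∃ (v : β) (w : H.Walk v v), w.IsCycle ∧
        x = fun e => (cycleEqCoeff σ c w e : ℝ)})
    (e₀ : Sym2 β) (he₀ : e₀ ∈ H.edgeSet) (hneg : a e₀ < 0)
    (hpos : ∀ e ∈ H.edgeSet, e ≠ e₀ → 0 ≤ a e) :
    ∃ (v : β) (w : H.Walk v v), w.IsCycle ∧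
      List.Chain' (· < ·) (w.support.dropLast.map (fun x => c (σ x))) :=
  stmt_16_general F H σ hσ c hc a ha e₀ he₀ hneg hpos
end

section
/- Let (H, σ) be a K₃-coloured graph, i.e., H is a graph and σ : V(H) → ℤ/3 assigns distinct colours to adjacent vertices. Then there is a colour homomorphism from (H, σ) to P∞³ (a graph homomorphism γ from H to the infinite path on ℤ with γ(v) mod 3 = σ(v) for all v) if and only if no cycle of H is wrapped, i.e., every cycle of H has wrap equal to 0. -/
/-!
If `γ` is a colour homomorphism, the wrap of a dart `uv` is `γ v - γ u`, so wraps telescope to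
zero around every closed walk. Conversely, the wrap is antisymmetric, and a closed walk has the
same wrap as its `bypass`, which is `nil`: every loop that `bypass` cuts out is a cycle or an edge
traversed back and forth. So wraps are path independent and integrate to a potential `φ` with
`wrap uv = φ v - φ u`. Since `wrap uv ≡ σ v - σ u (mod 3)`, the residue of `σ - φ` is constant
along edges, and adding its representative in `{0, 1, 2}` to `φ` gives a colour homomorphism.
-/

namespace SimpleGraph

variable {V G : Type*} [AddCommGroup G] {H : SimpleGraph V} {f : H.Dart → G}

namespace Walk

theorem sum_darts_eq_sub_of_eq_sub {φ : V → G} (hφ : ∀ d, f d = φ d.snd - φ d.fst) {u v : V}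
    (p : H.Walk u v) : (p.darts.map f).sum = φ v - φ u := by
  induction p with
  | nil => simp
  | cons h p ih =>
    rw [darts_cons, List.map_cons, List.sum_cons, ih, hφ]
    abel

theorem sum_darts_reverse (hf : ∀ d, f d.symm = -f d) {u v : V} (p : H.Walk u v) :
    (p.reverse.darts.map f).sum = -(p.darts.map f).sum := by
  simp [darts_reverse, List.sum_reverse, Function.comp_def, hf, List.sum_neg]

theorem sum_darts_cons_eq_zero_of_isPath (hf : ∀ d, f d.symm = -f d)
    (hcyc : ∀ (v : V) (c : H.Walk v v), c.IsCycle → (c.darts.map f).sum = 0)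
    {u v : V} (h : H.Adj u v) {p : H.Walk v u} (hp : p.IsPath) :
    ((cons h p).darts.map f).sum = 0 := by
  by_cases he : s(v, u) ∈ p.edges
  · rw [hp.eq_adj_toWalk_of_mem_edges he]
    change f ⟨(u, v), h⟩ + (f (Dart.symm ⟨(u, v), h⟩) + 0) = 0
    rw [hf, add_zero, add_neg_cancel]
  · exact hcyc u _ ((cons_isCycle_iff p h).mpr ⟨hp, by rwa [Sym2.eq_swap]⟩)

theorem sum_darts_bypass [DecidableEq V] (hf : ∀ d, f d.symm = -f d)
    (hcyc : ∀ (v : V) (c : H.Walk v v), c.IsCycle → (c.darts.map f).sum = 0)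
    {u v : V} (p : H.Walk u v) : (p.bypass.darts.map f).sum = (p.darts.map f).sum := by
  induction p with
  | nil => rfl
  | @cons u v w h p ih =>
    rw [bypass]
    split_ifs with hu
    · -- `h` closes the part of `p.bypass` before `u` into a loop at `u`
      have hsplit := congr_arg (fun q => (q.darts.map f).sum) (p.bypass.take_spec hu)
      have hloop := sum_darts_cons_eq_zero_of_isPath hf hcyc h ((bypass_isPath p).takeUntil hu)
      simp only [darts_append, darts_cons, List.map_append, List.map_cons, List.sum_append,
        List.sum_cons] at hsplit hloop ⊢
      rw [← ih, ← hsplit, ← add_assoc, hloop, zero_add]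
    · simp only [darts_cons, List.map_cons, List.sum_cons, ih]

theorem sum_darts_eq_zero_of_sum_cycle_eq_zero (hf : ∀ d, f d.symm = -f d)
    (hcyc : ∀ (v : V) (c : H.Walk v v), c.IsCycle → (c.darts.map f).sum = 0)
    {v : V} (p : H.Walk v v) : (p.darts.map f).sum = 0 := by
  classical
  rw [← sum_darts_bypass hf hcyc, (isPath_iff_nil.mp (bypass_isPath p)).eq_nil, darts_nil]
  rfl

end Walk

theorem exists_eq_sub_of_sum_cycle_eq_zero (hf : ∀ d, f d.symm = -f d)
    (hcyc : ∀ (v : V) (c : H.Walk v v), c.IsCycle → (c.darts.map f).sum = 0) :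
    ∃ φ : V → G, ∀ d, f d = φ d.snd - φ d.fst := by
  have hr (v : V) : H.Reachable (H.connectedComponentMk v).out v :=
    ConnectedComponent.exact (H.connectedComponentMk v).out_eq
  refine ⟨fun v => ((hr v).some.darts.map f).sum, fun d => ?_⟩
  have e : (H.connectedComponentMk d.snd).out = (H.connectedComponentMk d.fst).out := by
    rw [ConnectedComponent.eq.mpr d.adj.symm.reachable]
  have hloop := Walk.sum_darts_eq_zero_of_sum_cycle_eq_zero hf hcyc
    (((hr d.fst).some.concat d.adj).append ((hr d.snd).some.copy e rfl).reverse)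
  rw [Walk.darts_append, List.map_append, List.sum_append, Walk.sum_darts_reverse hf,
    Walk.darts_copy, Walk.darts_concat, List.map_concat, List.sum_concat] at hloop
  dsimp only
  rw [← sub_eq_zero, ← hloop]
  abel

namespace Dart

variable {σ : V → ZMod 3} {d : H.Dart}

def wrap (σ : V → ZMod 3) (d : H.Dart) : ℤ :=
  if σ d.snd = σ d.fst + 1 then 1 else -1

theorem wrap_symm (hσ : σ d.fst ≠ σ d.snd) : d.symm.wrap σ = -d.wrap σ := by
  have key : ∀ a b : ZMod 3, a ≠ b →
      (if a = b + 1 then (1 : ℤ) else -1) = -(if b = a + 1 then 1 else -1) := by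
    decide
  exact key _ _ hσ

theorem intCast_wrap (hσ : σ d.fst ≠ σ d.snd) : (d.wrap σ : ZMod 3) = σ d.snd - σ d.fst := by
  have key : ∀ a b : ZMod 3, a ≠ b →
      (((if b = a + 1 then 1 else -1 : ℤ)) : ZMod 3) = b - a := by
    decide
  exact key _ _ hσ

theorem wrap_eq_sub {γ : V → ℤ} (hγ : γ d.fst - γ d.snd = 1 ∨ γ d.snd - γ d.fst = 1)
    (hγσ : ∀ v, (γ v : ZMod 3) = σ v) : d.wrap σ = γ d.snd - γ d.fst := by
  have key : ∀ a : ZMod 3, a - 1 ≠ a + 1 := by decide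
  rw [wrap]
  rcases hγ with hdown | hup
  · have : σ d.snd = σ d.fst - 1 := by
      rw [← hγσ, ← hγσ, show γ d.snd = γ d.fst - 1 by omega, Int.cast_sub, Int.cast_one]
    rw [if_neg (this ▸ key _)]
    omega
  · have : σ d.snd = σ d.fst + 1 := by
      rw [← hγσ, ← hγσ, show γ d.snd = γ d.fst + 1 by omega, Int.cast_add, Int.cast_one]
    rw [if_pos this]
    omega

end Dart

theorem exists_colorHom_of_wrap_eq_sub {σ : V → ZMod 3} (hσ : ∀ x y, H.Adj x y → σ x ≠ σ y)
    {φ : V → ℤ} (hφ : ∀ d : H.Dart, d.wrap σ = φ d.snd - φ d.fst) :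
    ∃ γ : V → ℤ, (∀ x y, H.Adj x y → γ x - γ y = 1 ∨ γ y - γ x = 1) ∧
      ∀ v, (γ v : ZMod 3) = σ v := by
  refine ⟨fun v => φ v + ((σ v - φ v : ZMod 3).val : ℤ), fun x y h => ?_, fun v => ?_⟩
  · let d : H.Dart := ⟨(x, y), h⟩
    have hwrap : d.wrap σ = φ y - φ x := hφ d
    have hcast : ((d.wrap σ : ℤ) : ZMod 3) = σ y - σ x := d.intCast_wrap (hσ x y h)
    rw [hwrap, Int.cast_sub] at hcast
    have hshift : σ x - (φ x : ZMod 3) = σ y - φ y := by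
      linear_combination hcast
    simp only [hshift]
    unfold Dart.wrap at hwrap
    split_ifs at hwrap <;> omega
  · push_cast
    rw [ZMod.natCast_zmod_val]
    ring

end SimpleGraph

open SimpleGraph

/-- Let `(H, σ)` be a `K₃`-coloured graph (`σ : V(H) → ℤ/3` with
adjacent vertices receiving distinct colours).  There is a colour homomorphism from
`(H, σ)` to `P∞³` — a map `γ : V(H) → ℤ` with `|γ(x) − γ(y)| = 1` for every edge `xy`
and `γ(v) ≡ σ(v) (mod 3)` for every vertex — if and only if no cycle of `H` is
wrapped, i.e. every cycle has wrap `0`, where the wrap of a cycle is the sum over its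
darts `uv` of `+1` if `σ(v) = σ(u) + 1` and `−1` otherwise. -/
theorem stmt_19 {β : Type*} (H : SimpleGraph β) (σ : β → ZMod 3)
    (hσ : ∀ x y, H.Adj x y → σ x ≠ σ y) :
    (∃ γ : β → ℤ,
      (∀ x y, H.Adj x y → γ x - γ y = 1 ∨ γ y - γ x = 1) ∧
      ∀ v, ((γ v : ZMod 3) = σ v)) ↔
    (∀ (v : β) (w : H.Walk v v), w.IsCycle →
      (w.darts.map
        (fun d => if σ d.toProd.2 = σ d.toProd.1 + 1 then (1 : ℤ) else -1)).sum = 0) := by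
  show _ ↔ ∀ (v : β) (w : H.Walk v v), w.IsCycle → (w.darts.map (Dart.wrap σ)).sum = 0
  constructor
  · rintro ⟨γ, hγ, hγσ⟩ v w -
    rw [Walk.sum_darts_eq_sub_of_eq_sub (fun d => d.wrap_eq_sub (hγ _ _ d.adj) hγσ), sub_self]
  · intro hcyc
    obtain ⟨φ, hφ⟩ := exists_eq_sub_of_sum_cycle_eq_zero (fun d => d.wrap_symm (hσ _ _ d.adj)) hcyc
    exact exists_colorHom_of_wrap_eq_sub hσ hφ
end
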